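/- For each L among the eight logics L(ℚ,≤), L_c(ℚ,≤), L(ℚ,<), L_c(ℚ,<), L(ℝ,≤), L_c(ℝ,≤), L(ℝ,<), L_c(ℝ,<): ¬B⁺ ∈ L if and only if there is no function f : ℕ×ℕ → T satisfying (T1) and (T2). -/

import Mathlib

namespace FOML

/-- First-order modal formulas over a signature assigning to each arity `n` a type
`Pred n` of `n`-ary predicate letters; individual variables are indexed by `ℕ`.
(0-ary predicate letters are proposition letters.) -/
inductive Fml (Pred : ℕ → Type) : Type
  | atom : {n : ℕ} → Pred n → (Fin n → ℕ) → Fml Pred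
  | bot  : Fml Pred
  | imp  : Fml Pred → Fml Pred → Fml Pred
  | box  : Fml Pred → Fml Pred
  | all  : ℕ → Fml Pred → Fml Pred

namespace Fml

variable {Pred : ℕ → Type}

def neg (φ : Fml Pred) : Fml Pred := imp φ bot
def top : Fml Pred := neg bot
def and (φ ψ : Fml Pred) : Fml Pred := neg (imp φ (neg ψ))
def or (φ ψ : Fml Pred) : Fml Pred := imp (neg φ) ψ
def iff (φ ψ : Fml Pred) : Fml Pred := and (imp φ ψ) (imp ψ φ)
def dia (φ : Fml Pred) : Fml Pred := neg (box (neg φ))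
def ex (x : ℕ) (φ : Fml Pred) : Fml Pred := neg (all x (neg φ))

def bigAnd : List (Fml Pred) → Fml Pred
  | [] => top
  | φ :: l => and φ (bigAnd l)

def bigOr : List (Fml Pred) → Fml Pred
  | [] => bot
  | φ :: l => or φ (bigOr l)

/-- Iterated box: `□⁰φ = φ`, `□ⁿ⁺¹φ = □□ⁿφ`. -/
def boxN : ℕ → Fml Pred → Fml Pred
  | 0, φ => φ
  | n + 1, φ => box (boxN n φ)

/-- Replace every occurrence of `□` by `□⁺`, where `□⁺ψ = ψ ∧ □ψ`
(equivalently, every `◇` by its dual `◇⁺ψ = ◇ψ ∨ ψ`). -/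
def plus : Fml Pred → Fml Pred
  | atom P a => atom P a
  | bot => bot
  | imp φ ψ => imp (plus φ) (plus ψ)
  | box φ => and (plus φ) (box (plus φ))
  | all x φ => all x (plus φ)

end Fml

/-- A Kripke model with expanding domains based on the frame `⟨W, R⟩`:
a domain function `D` into nonempty subsets of the domain `Dom`, expanding along `R`,
and an interpretation `I` of predicate letters at each world, with
`I(w,P) ⊆ D(w)ⁿ` for `n`-ary `P`. -/
structure KModel (W : Type*) (R : W → W → Prop) (Pred : ℕ → Type) where
  Dom : Type
  D : W → Set Dom
  D_ne : ∀ w, (D w).Nonempty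
  D_mono : ∀ ⦃w v : W⦄, R w v → D w ⊆ D v
  I : W → (n : ℕ) → Pred n → (Fin n → Dom) → Prop
  I_dom : ∀ (w : W) (n : ℕ) (P : Pred n) (as : Fin n → Dom), I w n P as → ∀ i, as i ∈ D w

variable {W : Type*} {R : W → W → Prop} {Pred : ℕ → Type}

/-- Truth of a formula at a world of a Kripke model under an assignment. -/
def truth (M : KModel W R Pred) : Fml Pred → W → (ℕ → M.Dom) → Prop
  | .atom (n := n) P args, w, g => M.I w n P (fun i => g (args i))
  | .bot, _, _ => False
  | .imp φ ψ, w, g => truth M φ w g → truth M ψ w g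
  | .box φ, w, g => ∀ v : W, R w v → truth M φ v g
  | .all x φ, w, g => ∀ d ∈ M.D w, truth M φ w (Function.update g x d)

/-- A formula is true at a world `w` if it is true under every assignment
taking values in the domain of `w`. -/
def trueAt (M : KModel W R Pred) (w : W) (φ : Fml Pred) : Prop :=
  ∀ g : ℕ → M.Dom, (∀ x, g x ∈ M.D w) → truth M φ w g

/-- `φ ∈ L(W,R)`: validity on the frame `⟨W,R⟩` (truth in every model with
expanding domains based on it, at every world). -/
def ValidOn (R : W → W → Prop) (φ : Fml Pred) : Prop :=
  ∀ (M : KModel W R Pred) (w : W), trueAt M w φ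

/-- The model has (globally) constant domains. -/
def ConstDom (M : KModel W R Pred) : Prop := ∀ w v : W, M.D w = M.D v

/-- `φ ∈ L_c(W,R)`: truth in every model with constant domains based on `⟨W,R⟩`. -/
def ValidOnC (R : W → W → Prop) (φ : Fml Pred) : Prop :=
  ∀ (M : KModel W R Pred), ConstDom M → ∀ w : W, trueAt M w φ

/-- A finite set `T = {t₀, …, t_s}` of tile types (represented as `Fin (s+1)`, with
`t₀ = 0`), each with four edge colours. -/
structure TileSet where
  s : ℕ
  left : Fin (s + 1) → ℕ
  right : Fin (s + 1) → ℕ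
  up : Fin (s + 1) → ℕ
  down : Fin (s + 1) → ℕ

namespace TileSet

/-- (T1): colours match horizontally. -/
def T1 (ts : TileSet) (f : ℕ → ℕ → Fin (ts.s + 1)) : Prop :=
  ∀ n m : ℕ, ts.right (f n m) = ts.left (f (n + 1) m)

/-- (T2): colours match vertically. -/
def T2 (ts : TileSet) (f : ℕ → ℕ → Fin (ts.s + 1)) : Prop :=
  ∀ n m : ℕ, ts.up (f n m) = ts.down (f n (m + 1))

/-- (T3): the tile type `t₀` occurs infinitely often in the leftmost column. -/
def T3 (ts : TileSet) (f : ℕ → ℕ → Fin (ts.s + 1)) : Prop :=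
  {m : ℕ | f 0 m = 0}.Infinite

end TileSet

/-- The predicate letters used in the encoding: a binary letter `◁`; monadic letters
`M`, `P₀, …, P_{s+2}` and `P`; proposition letters `p` and `q`. -/
inductive Letter (s : ℕ) : ℕ → Type
  | lt : Letter s 2
  | M : Letter s 1
  | P : Fin (s + 3) → Letter s 1
  | Pm : Letter s 1
  | p : Letter s 0
  | q : Letter s 0

namespace Enc

/-- Formulas in the language of the encoding. -/
abbrev F (ts : TileSet) := Fml (Letter ts.s)

/-- The list of all tile types. -/
def tiles (ts : TileSet) : List (Fin (ts.s + 1)) := List.finRange (ts.s + 1)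

/-- Tile indices regarded as indices of the letters `P₀, …, P_{s+2}`. -/
def tl (ts : TileSet) (t : Fin (ts.s + 1)) : Fin (ts.s + 3) := ⟨t.1, by omega⟩

def pp (ts : TileSet) : F ts := .atom Letter.p Fin.elim0
def qq (ts : TileSet) : F ts := .atom Letter.q Fin.elim0
def Mx (ts : TileSet) (v : ℕ) : F ts := .atom Letter.M (fun _ => v)
def Px (ts : TileSet) (j : Fin (ts.s + 3)) (v : ℕ) : F ts := .atom (Letter.P j) (fun _ => v)
def PP (ts : TileSet) (v : ℕ) : F ts := .atom Letter.Pm (fun _ => v)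
def ltA (ts : TileSet) (v w : ℕ) : F ts := .atom Letter.lt ![v, w]

/-- `⟐φ = ◇(π ∧ ◇(¬π ∧ φ))`, for a "marker" formula `π` (the paper uses `π = p`,
and `π = ∀x P(x)` for the operator `⊡`). -/
def pdia (ts : TileSet) (π φ : F ts) : F ts := .dia (.and π (.dia (.and (.neg π) φ)))

/-- Iterated `⟐`. -/
def pdiaN (ts : TileSet) (π : F ts) : ℕ → F ts → F ts
  | 0, φ => φ
  | n + 1, φ => pdia ts π (pdiaN ts π n φ)

/-- `U(x) = ⋀_{t ∈ T} ¬P_t(x)`, with the tile letters given by `Pf`. -/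
def Ug (ts : TileSet) (Pf : Fin (ts.s + 1) → ℕ → F ts) (v : ℕ) : F ts :=
  .bigAnd ((tiles ts).map (fun t => .neg (Pf t v)))

/- The conjuncts of the formula `A`, parametrised by the formulas standing for
`x ◁ y` (`rel`), `M(x)` (`Mf`), `P_t(x)` (`Pf`) and `p` (`pf`); the individual
variables `x`, `y` are `0`, `1`. -/

/-- `A₀ = ∃x □U(x)` -/
def A0g (ts : TileSet) (Pf : Fin (ts.s + 1) → ℕ → F ts) : F ts :=
  .ex 0 (.box (Ug ts Pf 0))

/-- `A₁ = ∃x(¬U(x) ∧ M(x))` -/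
def A1g (ts : TileSet) (Mf : ℕ → F ts) (Pf : Fin (ts.s + 1) → ℕ → F ts) : F ts :=
  .ex 0 (.and (.neg (Ug ts Pf 0)) (Mf 0))

/-- `A₂ = ∀x∃y (x ◁ y)` -/
def A2g (ts : TileSet) (rel : ℕ → ℕ → F ts) : F ts := .all 0 (.ex 1 (rel 0 1))

/-- `A₃ = ∀x∀y(x◁y → □(∃x M(x) → x◁y))` -/
def A3g (ts : TileSet) (rel : ℕ → ℕ → F ts) (Mf : ℕ → F ts) : F ts :=
  .all 0 (.all 1 (.imp (rel 0 1) (.box (.imp (.ex 0 (Mf 0)) (rel 0 1)))))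

/-- `A₄ = ∀x∀y(x◁y → □(M(x) ↔ ¬p ∧ ⟐M(y) ∧ ¬⟐²M(y)))` -/
def A4g (ts : TileSet) (rel : ℕ → ℕ → F ts) (Mf : ℕ → F ts) (pf : F ts) : F ts :=
  .all 0 (.all 1 (.imp (rel 0 1)
    (.box (.iff (Mf 0)
      (.and (.neg pf) (.and (pdia ts pf (Mf 1)) (.neg (pdiaN ts pf 2 (Mf 1)))))))))

/-- `A₅ = ∀x∀y □⋀_{t∈T}(M(x) ∧ P_t(y) → □(M(x) → P_t(y)))` -/
def A5g (ts : TileSet) (Mf : ℕ → F ts) (Pf : Fin (ts.s + 1) → ℕ → F ts) : F ts :=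
  .all 0 (.all 1 (.box (.bigAnd ((tiles ts).map fun t =>
    .imp (.and (Mf 0) (Pf t 1)) (.box (.imp (Mf 0) (Pf t 1)))))))

/-- `A₆ = ∀x □⋀_{t∈T}(P_t(x) → ⋀_{t'≠t} ¬P_{t'}(x))` -/
def A6g (ts : TileSet) (Pf : Fin (ts.s + 1) → ℕ → F ts) : F ts :=
  .all 0 (.box (.bigAnd ((tiles ts).map fun t =>
    .imp (Pf t 0)
      (.bigAnd (((tiles ts).filter (fun t' => decide (t' ≠ t))).map fun t' => .neg (Pf t' 0))))))

/-- `A₇ = ∀x∀y □⋀_{t∈T}(x◁y ∧ P_t(x) → ⋁_{right(t)=left(t')} P_{t'}(y))` -/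
def A7g (ts : TileSet) (rel : ℕ → ℕ → F ts) (Pf : Fin (ts.s + 1) → ℕ → F ts) : F ts :=
  .all 0 (.all 1 (.box (.bigAnd ((tiles ts).map fun t =>
    .imp (.and (rel 0 1) (Pf t 0))
      (.bigOr (((tiles ts).filter fun t' => decide (ts.right t = ts.left t')).map
        fun t' => Pf t' 1))))))

/-- `A₈ = ∀x∀y □⋀_{t∈T}(M(x) ∧ P_t(y) → □(∃y(x◁y ∧ M(y)) → ⋁_{up(t)=down(t')} P_{t'}(y)))` -/
def A8g (ts : TileSet) (rel : ℕ → ℕ → F ts) (Mf : ℕ → F ts)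
    (Pf : Fin (ts.s + 1) → ℕ → F ts) : F ts :=
  .all 0 (.all 1 (.box (.bigAnd ((tiles ts).map fun t =>
    .imp (.and (Mf 0) (Pf t 1))
      (.box (.imp (.ex 1 (.and (rel 0 1) (Mf 1)))
        (.bigOr (((tiles ts).filter fun t' => decide (ts.up t = ts.down t')).map
          fun t' => Pf t' 1))))))))

/-- `A₉ = ∀x(M(x) → □⟐P_{t₀}(x))` -/
def A9g (ts : TileSet) (Mf : ℕ → F ts) (Pf : Fin (ts.s + 1) → ℕ → F ts) (pf : F ts) : F ts :=
  .all 0 (.imp (Mf 0) (.box (pdia ts pf (Pf 0 0))))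

/-- The list `[A₀, …, A₈]` (all conjuncts of `A` except `A₉`), parametrised. -/
def AlistB (ts : TileSet) (rel : ℕ → ℕ → F ts) (Mf : ℕ → F ts)
    (Pf : Fin (ts.s + 1) → ℕ → F ts) (pf : F ts) : List (F ts) :=
  [A0g ts Pf, A1g ts Mf Pf, A2g ts rel, A3g ts rel Mf, A4g ts rel Mf pf,
   A5g ts Mf Pf, A6g ts Pf, A7g ts rel Pf, A8g ts rel Mf Pf]

/-- The tile letters `P_{t₀}, …, P_{t_s}`, i.e. `P₀, …, P_s`. -/
def PfA (ts : TileSet) : Fin (ts.s + 1) → ℕ → F ts := fun t v => Px ts (tl ts t) v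

/-- The formula `A`: the conjunction of `A₀` through `A₉`. -/
def A (ts : TileSet) : F ts :=
  .bigAnd (AlistB ts (ltA ts) (Mx ts) (PfA ts) (pp ts) ++
    [A9g ts (Mx ts) (PfA ts) (pp ts)])

/-- The formula `B`: the conjunction of `A₀` through `A₈`. -/
def B (ts : TileSet) : F ts := .bigAnd (AlistB ts (ltA ts) (Mx ts) (PfA ts) (pp ts))

/-- `A₉• = ∀x(M(x) → □(∃y M(y) → ⟐(∃y M(y) → P_{t₀}(x))))` -/
def A9bul (ts : TileSet) : F ts :=
  .all 0 (.imp (Mx ts 0) (.box (.imp (.ex 1 (Mx ts 1))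
    (pdia ts (pp ts) (.imp (.ex 1 (Mx ts 1)) (PfA ts 0 0))))))

/-- The formula `A•`: the conjunction of `A₀` through `A₈` together with `A₉•`. -/
def Abullet (ts : TileSet) : F ts :=
  .bigAnd (AlistB ts (ltA ts) (Mx ts) (PfA ts) (pp ts) ++ [A9bul ts])

/-- `⟐(P_{s+1}(x) ∧ P_{s+2}(y))`, the formula substituted for `x ◁ y` in `A′`. -/
def relA' (ts : TileSet) (v w : ℕ) : F ts :=
  pdia ts (pp ts) (.and (Px ts ⟨ts.s + 1, by omega⟩ v) (Px ts ⟨ts.s + 2, by omega⟩ w))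

/-- The formula `A′`: the result of substituting `⟐(P_{s+1}(x) ∧ P_{s+2}(y))` for
`x ◁ y` throughout `A`. -/
def A' (ts : TileSet) : F ts :=
  .bigAnd (AlistB ts (relA' ts) (Mx ts) (PfA ts) (pp ts) ++
    [A9g ts (Mx ts) (PfA ts) (pp ts)])

/-- `∀x P(x)`, the marker formula of the operator `⊡`. -/
def pfS (ts : TileSet) : F ts := .all 0 (PP ts 0)

/-- `⊡φ = ◇(∀x P(x) ∧ ◇(¬∀x P(x) ∧ φ))`. -/
def bdia (ts : TileSet) (φ : F ts) : F ts := pdia ts (pfS ts) φ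

/-- Iterated `⊡`. -/
def bdiaN (ts : TileSet) (n : ℕ) (φ : F ts) : F ts := pdiaN ts (pfS ts) n φ

/-- `q ∧ P(v)`, the replacement of `M(v)`. -/
def MS (ts : TileSet) (v : ℕ) : F ts := .and (qq ts) (PP ts v)

/-- `βₙ(x) = ∃y(⊡^{s+4}(q ∧ P(y)) ∧ ¬⊡^{s+5}(q ∧ P(y)) ∧
⊡(⊡^{n+1}(q ∧ P(y)) ∧ ¬⊡^{n+2}(q ∧ P(y)) ∧ P(x)))`, and `βₙ(y)` with `x`, `y` exchanged
(the variables `x`, `y` are `0`, `1`, so the bound variable is `1 - v`). -/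
def beta (ts : TileSet) (n : Fin (ts.s + 3)) (v : ℕ) : F ts :=
  .ex (1 - v) (.and (bdiaN ts (ts.s + 4) (MS ts (1 - v)))
    (.and (.neg (bdiaN ts (ts.s + 5) (MS ts (1 - v))))
      (bdia ts (.and (bdiaN ts ((n : ℕ) + 1) (MS ts (1 - v)))
        (.and (.neg (bdiaN ts ((n : ℕ) + 2) (MS ts (1 - v)))) (PP ts v))))))

/-- The replacement `βₜ` of the tile letters. -/
def PfS (ts : TileSet) : Fin (ts.s + 1) → ℕ → F ts := fun t v => beta ts (tl ts t) v

/-- `⊡(β_{s+1}(x) ∧ β_{s+2}(y))`, the replacement of `x ◁ y` in `A*`. -/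
def relS (ts : TileSet) (v w : ℕ) : F ts :=
  bdia ts (.and (beta ts ⟨ts.s + 1, by omega⟩ v) (beta ts ⟨ts.s + 2, by omega⟩ w))

/-- `A₄* = ∀x∀y(⊡(β_{s+1}(x) ∧ β_{s+2}(y)) →
□(q ∧ P(x) ↔ ¬∀x P(x) ∧ ⊡^{s+4}(q ∧ P(y)) ∧ ¬⊡^{s+5}(q ∧ P(y))))` -/
def A4star (ts : TileSet) : F ts :=
  .all 0 (.all 1 (.imp (relS ts 0 1)
    (.box (.iff (MS ts 0)
      (.and (.neg (pfS ts))
        (.and (bdiaN ts (ts.s + 4) (MS ts 1)) (.neg (bdiaN ts (ts.s + 5) (MS ts 1)))))))))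

/-- `A₉* = ∀x(q ∧ P(x) → □⊡β₀(x))` -/
def A9star (ts : TileSet) : F ts :=
  .all 0 (.imp (MS ts 0) (.box (bdia ts (beta ts ⟨0, by omega⟩ 0))))

/-- The list `[A₀*, …, A₈*]`. -/
def BstarList (ts : TileSet) : List (F ts) :=
  [A0g ts (PfS ts), A1g ts (MS ts) (PfS ts), A2g ts (relS ts), A3g ts (relS ts) (MS ts),
   A4star ts, A5g ts (MS ts) (PfS ts), A6g ts (PfS ts), A7g ts (relS ts) (PfS ts),
   A8g ts (relS ts) (MS ts) (PfS ts)]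

/-- The formula `A*`: the conjunction of `A₀*` through `A₉*`. -/
def Astar (ts : TileSet) : F ts := .bigAnd (BstarList ts ++ [A9star ts])

/-- The formula `B*`: the conjunction of `A₀*` through `A₈*`. -/
def Bstar (ts : TileSet) : F ts := .bigAnd (BstarList ts)

/-- The formula `A⁺`: the result of replacing every `□` in `A*` by `□⁺`. -/
def Aplus (ts : TileSet) : F ts := (Astar ts).plus

/-- The formula `B⁺`: the result of replacing every `□` in `B*` by `□⁺`. -/
def Bplus (ts : TileSet) : F ts := (Bstar ts).plus

end Enc

end FOML
namespace FOML
open Enc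

section Transfer

variable {W : Type*} [LinearOrder W] {Pred : ℕ → Type}

/-- Reinterpret a model over `<` as a model (with the same data) over `≤`. -/
def leModel (M : KModel W (fun a b : W => a < b) Pred) :
    KModel W (fun a b : W => a ≤ b) Pred where
  Dom := M.Dom
  D := M.D
  D_ne := M.D_ne
  D_mono := by
    intro w v h
    rcases lt_or_eq_of_le h with h | rfl
    · exact M.D_mono h
    · exact subset_rfl
  I := M.I
  I_dom := M.I_dom

/-- Reinterpret a model over `≤` as a model (with the same data) over `<`. -/
def ltModel (M : KModel W (fun a b : W => a ≤ b) Pred) :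
    KModel W (fun a b : W => a < b) Pred where
  Dom := M.Dom
  D := M.D
  D_ne := M.D_ne
  D_mono := fun _ _ h => M.D_mono h.le
  I := M.I
  I_dom := M.I_dom

lemma leModel_ltModel (M : KModel W (fun a b : W => a ≤ b) Pred) :
    leModel (ltModel M) = M := rfl

lemma truth_and {R : W → W → Prop} (M : KModel W R Pred) (φ ψ : Fml Pred) (w : W)
    (g : ℕ → M.Dom) :
    truth M (Fml.and φ ψ) w g ↔ truth M φ w g ∧ truth M ψ w g := by
  simp only [Fml.and, Fml.neg, truth]
  tauto

lemma truth_neg {R : W → W → Prop} (M : KModel W R Pred) (φ : Fml Pred) (w : W)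
    (g : ℕ → M.Dom) :
    truth M (Fml.neg φ) w g ↔ ¬ truth M φ w g := Iff.rfl

/-- Over a linear order, the `plus` translation interpreted over `<` coincides with the
original formula interpreted over `≤`. -/
lemma truth_plus_lt (M : KModel W (fun a b : W => a < b) Pred) (φ : Fml Pred) :
    ∀ w g, truth M φ.plus w g ↔ truth (leModel M) φ w g := by
  induction φ with
  | atom P a => intro w g; exact Iff.rfl
  | bot => intro w g; exact Iff.rfl
  | imp φ ψ ihφ ihψ =>
    intro w g
    simp only [Fml.plus, truth]
    rw [ihφ w g, ihψ w g]
  | box φ ih =>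
    intro w g
    simp only [Fml.plus]
    rw [truth_and]
    simp only [truth]
    constructor
    · rintro ⟨h0, h1⟩ v hv
      rcases lt_or_eq_of_le hv with hv | hv
      · exact (ih v g).1 (h1 v hv)
      · exact hv ▸ (ih w g).1 h0
    · intro h
      exact ⟨(ih w g).2 (h w le_rfl), fun v hv => (ih v g).2 (h v hv.le)⟩
  | all x φ ih =>
    intro w g
    simp only [Fml.plus, truth]
    constructor
    · intro h d hd; exact (ih w _).1 (h d hd)
    · intro h d hd; exact (ih w _).2 (h d hd)

/-- Over a reflexive (here: `≤`) frame the `plus` translation is equivalent to the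
original formula. -/
lemma truth_plus_le (M : KModel W (fun a b : W => a ≤ b) Pred) (φ : Fml Pred) :
    ∀ w g, truth M φ.plus w g ↔ truth M φ w g := by
  induction φ with
  | atom P a => intro w g; exact Iff.rfl
  | bot => intro w g; exact Iff.rfl
  | imp φ ψ ihφ ihψ =>
    intro w g
    simp only [Fml.plus, truth]
    rw [ihφ w g, ihψ w g]
  | box φ ih =>
    intro w g
    simp only [Fml.plus]
    rw [truth_and]
    simp only [truth]
    constructor
    · rintro ⟨_, h1⟩ v hv; exact (ih v g).1 (h1 v hv)
    · intro h; exact ⟨(ih w g).2 (h w le_rfl), fun v hv => (ih v g).2 (h v hv)⟩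
  | all x φ ih =>
    intro w g
    simp only [Fml.plus, truth]
    constructor
    · intro h d hd; exact (ih w _).1 (h d hd)
    · intro h d hd; exact (ih w _).2 (h d hd)

end Transfer


/-- Satisfiability of `B*` in an expanding-domain model over `(W,≤)`. -/
def SatB (ts : TileSet) (W : Type) [LinearOrder W] : Prop :=
  ∃ M : KModel W (fun a b : W => a ≤ b) (Letter ts.s), ∃ w g,
    (∀ x, g x ∈ M.D w) ∧ truth M (Bstar ts) w g

/-- Satisfiability of `B*` in a constant-domain model over `(W,≤)`. -/
def SatBc (ts : TileSet) (W : Type) [LinearOrder W] : Prop :=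
  ∃ M : KModel W (fun a b : W => a ≤ b) (Letter ts.s), ConstDom M ∧ ∃ w g,
    (∀ x, g x ∈ M.D w) ∧ truth M (Bstar ts) w g


section Semantics

variable {ts : TileSet} {W : Type} [LinearOrder W]

/-- The interpretation of the monadic letter `P`. -/
def psem (M : KModel W (fun a b : W => a ≤ b) (Letter ts.s)) (v : W) (d : M.Dom) : Prop :=
  M.I v 1 Letter.Pm (fun _ => d)

/-- The interpretation of the proposition letter `q`. -/
def qsem (M : KModel W (fun a b : W => a ≤ b) (Letter ts.s)) (v : W) : Prop :=
  M.I v 0 Letter.q (fun i => i.elim0)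

/-- The marker `∀x P(x)` of the operator `⊡`. -/
def marksem (M : KModel W (fun a b : W => a ≤ b) (Letter ts.s)) (v : W) : Prop :=
  ∀ d ∈ M.D v, psem M v d

/-- The replacement `q ∧ P(·)` of `M(·)`. -/
def Msem (M : KModel W (fun a b : W => a ≤ b) (Letter ts.s)) (d : M.Dom) (v : W) : Prop :=
  qsem M v ∧ psem M v d

/-- Semantic counterpart of the iterated operator `⊡`. -/
def DiaSem (M : KModel W (fun a b : W => a ≤ b) (Letter ts.s)) :
    ℕ → (W → Prop) → W → Prop
  | 0, ψ, v => ψ v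
  | k+1, ψ, v => ∃ a, v ≤ a ∧ marksem M a ∧ ∃ b, a ≤ b ∧ ¬ marksem M b ∧ DiaSem M k ψ b

/-- Semantic counterpart of `βₙ(·)`. -/
def BetaSem (M : KModel W (fun a b : W => a ≤ b) (Letter ts.s)) (n : ℕ) (d : M.Dom)
    (w : W) : Prop :=
  ∃ e ∈ M.D w, DiaSem M (ts.s+4) (Msem M e) w ∧ ¬ DiaSem M (ts.s+5) (Msem M e) w ∧
    DiaSem M 1 (fun b => DiaSem M (n+1) (Msem M e) b ∧ ¬ DiaSem M (n+2) (Msem M e) b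
      ∧ psem M b d) w

/-- Semantic counterpart of the replacement of `x ◁ y`. -/
def RelSem (M : KModel W (fun a b : W => a ≤ b) (Letter ts.s)) (x y : M.Dom) (w : W) :
    Prop :=
  DiaSem M 1 (fun b => BetaSem M (ts.s+1) x b ∧ BetaSem M (ts.s+2) y b) w

variable (M : KModel W (fun a b : W => a ≤ b) (Letter ts.s))

lemma DiaSem_congr {ψ ψ' : W → Prop} (h : ∀ b, ψ b ↔ ψ' b) :
    ∀ k v, DiaSem M k ψ v ↔ DiaSem M k ψ' v := by
  intro k
  induction k with
  | zero => intro v; exact h v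
  | succ k ih =>
    intro v
    constructor
    · rintro ⟨a, hva, hma, b, hab, hmb, hd⟩
      exact ⟨a, hva, hma, b, hab, hmb, (ih b).1 hd⟩
    · rintro ⟨a, hva, hma, b, hab, hmb, hd⟩
      exact ⟨a, hva, hma, b, hab, hmb, (ih b).2 hd⟩

lemma DiaSem_exists {ψ : W → Prop} :
    ∀ k v, DiaSem M (k+1) ψ v → ∃ b, v ≤ b ∧ ¬ marksem M b ∧ ψ b := by
  intro k
  induction k with
  | zero =>
    rintro v ⟨a, hva, _, b, hab, hmb, hd⟩
    exact ⟨b, le_trans hva hab, hmb, hd⟩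
  | succ k ih =>
    rintro v ⟨a, hva, _, b, hab, hmb, hd⟩
    obtain ⟨c, hbc, hmc, hc⟩ := ih b hd
    exact ⟨c, le_trans (le_trans hva hab) hbc, hmc, hc⟩

-- basic truth unfolding lemmas
variable {Pred : ℕ → Type}

lemma truth_imp {R : W → W → Prop} (N : KModel W R Pred) (φ ψ : Fml Pred) (w : W)
    (g : ℕ → N.Dom) :
    truth N (Fml.imp φ ψ) w g ↔ (truth N φ w g → truth N ψ w g) := Iff.rfl

lemma truth_all {R : W → W → Prop} (N : KModel W R Pred) (x : ℕ) (φ : Fml Pred) (w : W)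
    (g : ℕ → N.Dom) :
    truth N (Fml.all x φ) w g ↔ ∀ d ∈ N.D w, truth N φ w (Function.update g x d) := Iff.rfl

lemma truth_box (N : KModel W (fun a b : W => a ≤ b) Pred) (φ : Fml Pred) (w : W)
    (g : ℕ → N.Dom) :
    truth N (Fml.box φ) w g ↔ ∀ v, w ≤ v → truth N φ v g := Iff.rfl

lemma truth_or {R : W → W → Prop} (N : KModel W R Pred) (φ ψ : Fml Pred) (w : W)
    (g : ℕ → N.Dom) :
    truth N (Fml.or φ ψ) w g ↔ truth N φ w g ∨ truth N ψ w g := by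
  simp only [Fml.or, Fml.neg, truth]
  tauto

lemma truth_iff {R : W → W → Prop} (N : KModel W R Pred) (φ ψ : Fml Pred) (w : W)
    (g : ℕ → N.Dom) :
    truth N (Fml.iff φ ψ) w g ↔ (truth N φ w g ↔ truth N ψ w g) := by
  simp only [Fml.iff, Fml.and, Fml.imp, Fml.neg, truth]
  tauto

lemma truth_ex {R : W → W → Prop} (N : KModel W R Pred) (x : ℕ) (φ : Fml Pred) (w : W)
    (g : ℕ → N.Dom) :
    truth N (Fml.ex x φ) w g ↔ ∃ d ∈ N.D w, truth N φ w (Function.update g x d) := by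
  simp only [Fml.ex, Fml.neg, truth]
  constructor
  · intro h
    by_contra hc
    push_neg at hc
    exact h fun d hd ht => hc d hd ht
  · rintro ⟨d, hd, ht⟩ h
    exact h d hd ht

lemma truth_dia (N : KModel W (fun a b : W => a ≤ b) Pred) (φ : Fml Pred) (w : W)
    (g : ℕ → N.Dom) :
    truth N (Fml.dia φ) w g ↔ ∃ v, w ≤ v ∧ truth N φ v g := by
  simp only [Fml.dia, Fml.neg, truth]
  constructor
  · intro h
    by_contra hc
    push_neg at hc
    exact h fun v hv ht => hc v hv ht
  · rintro ⟨v, hv, ht⟩ h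
    exact h v hv ht

lemma truth_bigAnd {R : W → W → Prop} (N : KModel W R Pred) (l : List (Fml Pred)) (w : W)
    (g : ℕ → N.Dom) :
    truth N (Fml.bigAnd l) w g ↔ ∀ φ ∈ l, truth N φ w g := by
  induction l with
  | nil => simp [Fml.bigAnd, Fml.top, Fml.neg, truth]
  | cons φ l ih =>
    rw [Fml.bigAnd, truth_and, ih]
    simp

lemma truth_bigOr {R : W → W → Prop} (N : KModel W R Pred) (l : List (Fml Pred)) (w : W)
    (g : ℕ → N.Dom) :
    truth N (Fml.bigOr l) w g ↔ ∃ φ ∈ l, truth N φ w g := by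
  induction l with
  | nil => simp [Fml.bigOr, truth]
  | cons φ l ih =>
    rw [Fml.bigOr, truth_or, ih]
    simp

end Semantics

section Characterize

variable {ts : TileSet} {W : Type} [LinearOrder W]
variable (M : KModel W (fun a b : W => a ≤ b) (Letter ts.s))

lemma truth_qq (w : W) (g : ℕ → M.Dom) : truth M (qq ts) w g ↔ qsem M w := by
  show M.I w 0 Letter.q _ ↔ M.I w 0 Letter.q _
  constructor <;> intro h <;> convert h using 2 <;> funext i <;> exact i.elim0

lemma truth_PP (vr : ℕ) (w : W) (g : ℕ → M.Dom) :
    truth M (PP ts vr) w g ↔ psem M w (g vr) := Iff.rfl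

lemma truth_pfS (w : W) (g : ℕ → M.Dom) : truth M (pfS ts) w g ↔ marksem M w := by
  show (∀ d ∈ M.D w, truth M (PP ts 0) w (Function.update g 0 d)) ↔ _
  unfold marksem
  constructor
  · intro h d hd
    have := (truth_PP M 0 w (Function.update g 0 d)).1 (h d hd)
    rwa [Function.update_self] at this
  · intro h d hd
    rw [truth_PP, Function.update_self]
    exact h d hd

lemma truth_MS (vr : ℕ) (w : W) (g : ℕ → M.Dom) :
    truth M (MS ts vr) w g ↔ Msem M (g vr) w := by
  rw [MS, truth_and, truth_qq, truth_PP]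
  exact Iff.rfl

lemma truth_bdiaN (k : ℕ) (φ : F ts) :
    ∀ (w : W) (g : ℕ → M.Dom),
      truth M (bdiaN ts k φ) w g ↔ DiaSem M k (fun b => truth M φ b g) w := by
  induction k with
  | zero => intro w g; exact Iff.rfl
  | succ k ih =>
    intro w g
    show truth M (pdia ts (pfS ts) (pdiaN ts (pfS ts) k φ)) w g ↔ _
    rw [pdia, truth_dia]
    show _ ↔ ∃ a, w ≤ a ∧ marksem M a ∧ ∃ b, a ≤ b ∧ ¬ marksem M b ∧ _
    refine exists_congr fun a => and_congr_right fun _ => ?_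
    rw [truth_and, truth_pfS, truth_dia]
    refine and_congr_right fun _ => exists_congr fun b => and_congr_right fun _ => ?_
    rw [truth_and, truth_neg, truth_pfS]
    exact and_congr_right fun _ => ih b g

lemma truth_bdia (φ : F ts) (w : W) (g : ℕ → M.Dom) :
    truth M (bdia ts φ) w g ↔ DiaSem M 1 (fun b => truth M φ b g) w :=
  truth_bdiaN M 1 φ w g

lemma truth_beta (n : Fin (ts.s+3)) (vr : ℕ) (hvr : vr = 0 ∨ vr = 1) (w : W)
    (g : ℕ → M.Dom) :
    truth M (beta ts n vr) w g ↔ BetaSem M (n : ℕ) (g vr) w := by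
  have hne : vr ≠ 1 - vr := by rcases hvr with rfl | rfl <;> simp
  rw [beta, truth_ex]
  unfold BetaSem
  refine exists_congr fun e => and_congr_right fun _ => ?_
  rw [truth_and, truth_and, truth_neg]
  have hMS : ∀ (b : W), truth M (MS ts (1 - vr)) b (Function.update g (1 - vr) e) ↔
      Msem M e b := by
    intro b
    rw [truth_MS, Function.update_self]
  have h1 : ∀ k (b : W), truth M (bdiaN ts k (MS ts (1 - vr))) b
      (Function.update g (1 - vr) e) ↔ DiaSem M k (Msem M e) b := by
    intro k b
    rw [truth_bdiaN]
    exact DiaSem_congr M hMS k b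
  rw [h1, h1]
  refine and_congr_right fun _ => and_congr_right fun _ => ?_
  rw [truth_bdia]
  refine DiaSem_congr M (fun b => ?_) 1 w
  rw [truth_and, truth_and, truth_neg, h1, h1, truth_PP, Function.update_of_ne hne]

lemma truth_relS (w : W) (g : ℕ → M.Dom) :
    truth M (relS ts 0 1) w g ↔ RelSem M (g 0) (g 1) w := by
  rw [relS, truth_bdia]
  unfold RelSem
  refine DiaSem_congr M (fun b => ?_) 1 w
  rw [truth_and, truth_beta M _ 0 (Or.inl rfl), truth_beta M _ 1 (Or.inr rfl)]

end Characterize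

section Conjuncts

variable {ts : TileSet} {W : Type} [LinearOrder W]
variable (M : KModel W (fun a b : W => a ≤ b) (Letter ts.s))

lemma truth_PfS (t : Fin (ts.s+1)) (vr : ℕ) (hvr : vr = 0 ∨ vr = 1) (w : W)
    (g : ℕ → M.Dom) :
    truth M (PfS ts t vr) w g ↔ BetaSem M (t : ℕ) (g vr) w :=
  truth_beta M (tl ts t) vr hvr w g

lemma truth_Ug (vr : ℕ) (hvr : vr = 0 ∨ vr = 1) (w : W) (g : ℕ → M.Dom) :
    truth M (Ug ts (PfS ts) vr) w g ↔ ∀ t : Fin (ts.s+1), ¬ BetaSem M (t : ℕ) (g vr) w := by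
  rw [Ug, truth_bigAnd]
  constructor
  · intro h t
    have := h _ (List.mem_map_of_mem (List.mem_finRange t))
    rwa [truth_neg, truth_PfS M t vr hvr] at this
  · intro h φ hφ
    obtain ⟨t, _, rfl⟩ := List.mem_map.1 hφ
    rw [truth_neg, truth_PfS M t vr hvr]
    exact h t

/-- Semantic statement of `A₀*`. -/
def Sem0 (M : KModel W (fun a b : W => a ≤ b) (Letter ts.s)) (w : W) : Prop :=
  ∃ x ∈ M.D w, ∀ v, w ≤ v → ∀ t : Fin (ts.s+1), ¬ BetaSem M (t : ℕ) x v

/-- Semantic statement of `A₁*`. -/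
def Sem1 (M : KModel W (fun a b : W => a ≤ b) (Letter ts.s)) (w : W) : Prop :=
  ∃ x ∈ M.D w, (¬ ∀ t : Fin (ts.s+1), ¬ BetaSem M (t : ℕ) x w) ∧ Msem M x w

/-- Semantic statement of `A₂*`. -/
def Sem2 (M : KModel W (fun a b : W => a ≤ b) (Letter ts.s)) (w : W) : Prop :=
  ∀ x ∈ M.D w, ∃ y ∈ M.D w, RelSem M x y w

/-- Semantic statement of `A₃*`. -/
def Sem3 (M : KModel W (fun a b : W => a ≤ b) (Letter ts.s)) (w : W) : Prop :=
  ∀ x ∈ M.D w, ∀ y ∈ M.D w, RelSem M x y w →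
    ∀ v, w ≤ v → (∃ z ∈ M.D v, Msem M z v) → RelSem M x y v

/-- Semantic statement of `A₄*`. -/
def Sem4 (M : KModel W (fun a b : W => a ≤ b) (Letter ts.s)) (w : W) : Prop :=
  ∀ x ∈ M.D w, ∀ y ∈ M.D w, RelSem M x y w →
    ∀ v, w ≤ v → (Msem M x v ↔ ¬ marksem M v ∧ DiaSem M (ts.s+4) (Msem M y) v ∧
      ¬ DiaSem M (ts.s+5) (Msem M y) v)

/-- Semantic statement of `A₅*`. -/
def Sem5 (M : KModel W (fun a b : W => a ≤ b) (Letter ts.s)) (w : W) : Prop :=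
  ∀ x ∈ M.D w, ∀ y ∈ M.D w, ∀ v, w ≤ v → ∀ t : Fin (ts.s+1),
    Msem M x v ∧ BetaSem M (t : ℕ) y v → ∀ u, v ≤ u → Msem M x u → BetaSem M (t : ℕ) y u

/-- Semantic statement of `A₆*`. -/
def Sem6 (M : KModel W (fun a b : W => a ≤ b) (Letter ts.s)) (w : W) : Prop :=
  ∀ x ∈ M.D w, ∀ v, w ≤ v → ∀ t : Fin (ts.s+1), BetaSem M (t : ℕ) x v →
    ∀ t' : Fin (ts.s+1), t' ≠ t → ¬ BetaSem M (t' : ℕ) x v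

/-- Semantic statement of `A₇*`. -/
def Sem7 (M : KModel W (fun a b : W => a ≤ b) (Letter ts.s)) (w : W) : Prop :=
  ∀ x ∈ M.D w, ∀ y ∈ M.D w, ∀ v, w ≤ v → ∀ t : Fin (ts.s+1),
    RelSem M x y v ∧ BetaSem M (t : ℕ) x v →
      ∃ t' : Fin (ts.s+1), ts.right t = ts.left t' ∧ BetaSem M (t' : ℕ) y v

/-- Semantic statement of `A₈*`. -/
def Sem8 (M : KModel W (fun a b : W => a ≤ b) (Letter ts.s)) (w : W) : Prop :=
  ∀ x ∈ M.D w, ∀ y ∈ M.D w, ∀ v, w ≤ v → ∀ t : Fin (ts.s+1),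
    Msem M x v ∧ BetaSem M (t : ℕ) y v → ∀ u, v ≤ u →
      (∃ z ∈ M.D u, RelSem M x z u ∧ Msem M z u) →
        ∃ t' : Fin (ts.s+1), ts.up t = ts.down t' ∧ BetaSem M (t' : ℕ) y u

lemma upd0 (g : ℕ → M.Dom) (x : M.Dom) : Function.update g 0 x 0 = x :=
  Function.update_self 0 x g

lemma upd10 (g : ℕ → M.Dom) (x y : M.Dom) :
    Function.update (Function.update g 0 x) 1 y 0 = x := by
  rw [Function.update_of_ne (by norm_num : (0:ℕ) ≠ 1), Function.update_self]

lemma upd11 (g : ℕ → M.Dom) (x y : M.Dom) :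
    Function.update (Function.update g 0 x) 1 y 1 = y := by simp

lemma truth_A0g (w : W) (g : ℕ → M.Dom) :
    truth M (A0g ts (PfS ts)) w g ↔ Sem0 M w := by
  rw [A0g, truth_ex]
  refine exists_congr fun x => and_congr_right fun _ => ?_
  rw [truth_box]
  refine forall_congr' fun v => imp_congr_right fun _ => ?_
  rw [truth_Ug M 0 (Or.inl rfl), upd0]

lemma truth_A1g (w : W) (g : ℕ → M.Dom) :
    truth M (A1g ts (MS ts) (PfS ts)) w g ↔ Sem1 M w := by
  rw [A1g, truth_ex]
  refine exists_congr fun x => and_congr_right fun _ => ?_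
  rw [truth_and, truth_neg, truth_Ug M 0 (Or.inl rfl), truth_MS, upd0]

lemma truth_A2g (w : W) (g : ℕ → M.Dom) :
    truth M (A2g ts (relS ts)) w g ↔ Sem2 M w := by
  rw [A2g, truth_all]
  refine forall_congr' fun x => imp_congr_right fun _ => ?_
  rw [truth_ex]
  refine exists_congr fun y => and_congr_right fun _ => ?_
  rw [truth_relS, upd10, upd11]

lemma truth_A3g (w : W) (g : ℕ → M.Dom) :
    truth M (A3g ts (relS ts) (MS ts)) w g ↔ Sem3 M w := by
  rw [A3g, truth_all]
  refine forall_congr' fun x => imp_congr_right fun _ => ?_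
  rw [truth_all]
  refine forall_congr' fun y => imp_congr_right fun _ => ?_
  rw [truth_imp, truth_relS, upd10, upd11, truth_box]
  refine imp_congr_right fun _ => forall_congr' fun v => imp_congr_right fun _ => ?_
  rw [truth_imp, truth_ex, truth_relS, upd10, upd11]
  refine imp_congr ?_ Iff.rfl
  refine exists_congr fun z => and_congr_right fun _ => ?_
  rw [truth_MS, upd0]

lemma truth_A4star (w : W) (g : ℕ → M.Dom) :
    truth M (A4star ts) w g ↔ Sem4 M w := by
  rw [A4star, truth_all]
  refine forall_congr' fun x => imp_congr_right fun _ => ?_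
  rw [truth_all]
  refine forall_congr' fun y => imp_congr_right fun _ => ?_
  rw [truth_imp, show relS ts 0 1 = relS ts 0 1 from rfl, truth_relS, upd10, upd11, truth_box]
  refine imp_congr_right fun _ => forall_congr' fun v => imp_congr_right fun _ => ?_
  rw [truth_iff, truth_MS, upd10, truth_and, truth_neg, truth_pfS, truth_and, truth_neg,
    truth_bdiaN, truth_bdiaN]
  have h : ∀ (b : W), truth M (MS ts 1) b (Function.update (Function.update g 0 x) 1 y) ↔
      Msem M y b := by
    intro b
    rw [truth_MS, upd11]
  rw [DiaSem_congr M h, DiaSem_congr M h]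

lemma truth_A5g (w : W) (g : ℕ → M.Dom) :
    truth M (A5g ts (MS ts) (PfS ts)) w g ↔ Sem5 M w := by
  rw [A5g, truth_all]
  refine forall_congr' fun x => imp_congr_right fun _ => ?_
  rw [truth_all]
  refine forall_congr' fun y => imp_congr_right fun _ => ?_
  rw [truth_box]
  refine forall_congr' fun v => imp_congr_right fun _ => ?_
  rw [truth_bigAnd]
  constructor
  · intro h t ht u hu hMu
    have := h _ (List.mem_map_of_mem (List.mem_finRange t))
    rw [truth_imp, truth_and, truth_MS, upd10, truth_PfS M t 1 (Or.inr rfl), upd11,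
      truth_box] at this
    have := this ht u hu
    rw [truth_imp, truth_MS, upd10, truth_PfS M t 1 (Or.inr rfl), upd11] at this
    exact this hMu
  · intro h φ hφ
    obtain ⟨t, _, rfl⟩ := List.mem_map.1 hφ
    rw [truth_imp, truth_and, truth_MS, upd10, truth_PfS M t 1 (Or.inr rfl), upd11,
      truth_box]
    intro ht u hu
    rw [truth_imp, truth_MS, upd10, truth_PfS M t 1 (Or.inr rfl), upd11]
    exact h t ht u hu

lemma truth_A6g (w : W) (g : ℕ → M.Dom) :
    truth M (A6g ts (PfS ts)) w g ↔ Sem6 M w := by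
  rw [A6g, truth_all]
  refine forall_congr' fun x => imp_congr_right fun _ => ?_
  rw [truth_box]
  refine forall_congr' fun v => imp_congr_right fun _ => ?_
  rw [truth_bigAnd]
  constructor
  · intro h t ht t' hne
    have := h _ (List.mem_map_of_mem (List.mem_finRange t))
    rw [truth_imp, truth_PfS M t 0 (Or.inl rfl), upd0, truth_bigAnd] at this
    have := this ht _ (List.mem_map_of_mem
      (List.mem_filter.2 ⟨List.mem_finRange t', by simpa using hne⟩))
    rwa [truth_neg, truth_PfS M t' 0 (Or.inl rfl), upd0] at this
  · intro h φ hφ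
    obtain ⟨t, _, rfl⟩ := List.mem_map.1 hφ
    rw [truth_imp, truth_PfS M t 0 (Or.inl rfl), upd0, truth_bigAnd]
    intro ht ψ hψ
    obtain ⟨t', ht', rfl⟩ := List.mem_map.1 hψ
    rw [truth_neg, truth_PfS M t' 0 (Or.inl rfl), upd0]
    exact h t ht t' (by simpa using (List.mem_filter.1 ht').2)

lemma truth_A7g (w : W) (g : ℕ → M.Dom) :
    truth M (A7g ts (relS ts) (PfS ts)) w g ↔ Sem7 M w := by
  rw [A7g, truth_all]
  refine forall_congr' fun x => imp_congr_right fun hx => ?_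
  rw [truth_all]
  refine forall_congr' fun y => imp_congr_right fun hy => ?_
  rw [truth_box]
  refine forall_congr' fun v => imp_congr_right fun hv => ?_
  rw [truth_bigAnd]
  constructor
  · intro h t hpre
    have := h _ (List.mem_map_of_mem (List.mem_finRange t))
    rw [truth_imp, truth_and, truth_relS, upd10, upd11,
      truth_PfS M t 0 (Or.inl rfl), upd10, truth_bigOr] at this
    obtain ⟨φ, hφ, hb⟩ := this hpre
    obtain ⟨t', ht', rfl⟩ := List.mem_map.1 hφ
    rw [truth_PfS M t' 1 (Or.inr rfl), upd11] at hb
    exact ⟨t', by simpa using (List.mem_filter.1 ht').2, hb⟩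
  · intro h φ hφ
    obtain ⟨t, _, rfl⟩ := List.mem_map.1 hφ
    rw [truth_imp, truth_and, truth_relS, upd10, upd11,
      truth_PfS M t 0 (Or.inl rfl), upd10, truth_bigOr]
    intro hpre
    obtain ⟨t', hrl, hb⟩ := h t hpre
    refine ⟨PfS ts t' 1, List.mem_map_of_mem
      (List.mem_filter.2 ⟨List.mem_finRange t', by simpa using hrl⟩), ?_⟩
    rw [truth_PfS M t' 1 (Or.inr rfl), upd11]
    exact hb

lemma truth_A8g (w : W) (g : ℕ → M.Dom) :
    truth M (A8g ts (relS ts) (MS ts) (PfS ts)) w g ↔ Sem8 M w := by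
  rw [A8g, truth_all]
  refine forall_congr' fun x => imp_congr_right fun hx => ?_
  rw [truth_all]
  refine forall_congr' fun y => imp_congr_right fun hy => ?_
  rw [truth_box]
  refine forall_congr' fun v => imp_congr_right fun hv => ?_
  rw [truth_bigAnd]
  have hz : ∀ (u : W),
      truth M (Fml.ex 1 (Fml.and (relS ts 0 1) (MS ts 1))) u
        (Function.update (Function.update g 0 x) 1 y) ↔
      ∃ z ∈ M.D u, RelSem M x z u ∧ Msem M z u := by
    intro u
    rw [truth_ex]
    refine exists_congr fun z => and_congr_right fun _ => ?_
    rw [truth_and, truth_relS, truth_MS]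
    rw [Function.update_idem, upd10, upd11]
  constructor
  · intro h t hpre u hu hex
    have := h _ (List.mem_map_of_mem (List.mem_finRange t))
    rw [truth_imp, truth_and, truth_MS, upd10, truth_PfS M t 1 (Or.inr rfl), upd11,
      truth_box] at this
    have := this hpre u hu
    rw [truth_imp, hz, truth_bigOr] at this
    obtain ⟨φ, hφ, hb⟩ := this hex
    obtain ⟨t', ht', rfl⟩ := List.mem_map.1 hφ
    rw [truth_PfS M t' 1 (Or.inr rfl), upd11] at hb
    exact ⟨t', by simpa using (List.mem_filter.1 ht').2, hb⟩
  · intro h φ hφ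
    obtain ⟨t, _, rfl⟩ := List.mem_map.1 hφ
    rw [truth_imp, truth_and, truth_MS, upd10, truth_PfS M t 1 (Or.inr rfl), upd11,
      truth_box]
    intro hpre u hu
    rw [truth_imp, hz, truth_bigOr]
    intro hex
    obtain ⟨t', hud, hb⟩ := h t hpre u hu hex
    refine ⟨PfS ts t' 1, List.mem_map_of_mem
      (List.mem_filter.2 ⟨List.mem_finRange t', by simpa using hud⟩), ?_⟩
    rw [truth_PfS M t' 1 (Or.inr rfl), upd11]
    exact hb

/-- The conjunction of the semantic statements of `A₀*`–`A₈*`. -/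
def SemAll (M : KModel W (fun a b : W => a ≤ b) (Letter ts.s)) (w : W) : Prop :=
  Sem0 M w ∧ Sem1 M w ∧ Sem2 M w ∧ Sem3 M w ∧ Sem4 M w ∧ Sem5 M w ∧ Sem6 M w ∧
    Sem7 M w ∧ Sem8 M w

lemma truth_Bstar (w : W) (g : ℕ → M.Dom) :
    truth M (Bstar ts) w g ↔ SemAll M w := by
  rw [Bstar, BstarList, truth_bigAnd]
  simp only [List.forall_mem_cons, List.not_mem_nil, false_implies, implies_true, and_true,
    List.forall_mem_nil]
  rw [truth_A0g, truth_A1g, truth_A2g, truth_A3g, truth_A4star, truth_A5g, truth_A6g,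
    truth_A7g, truth_A8g]
  rfl

end Conjuncts

section Decode

variable {ts : TileSet} {W : Type} [LinearOrder W]

/-- From the semantic content of `B*` at a world, extract a tiling of `ℕ × ℕ`. -/
lemma decode_semAll (M : KModel W (fun a b : W => a ≤ b) (Letter ts.s)) (w₀ : W)
    (h : SemAll M w₀) : ∃ f : ℕ → ℕ → Fin (ts.s + 1), ts.T1 f ∧ ts.T2 f := by
  obtain ⟨-, h1, h2, h3, h4, -, h6, h7, h8⟩ := h
  obtain ⟨x₀, hx₀D, hx₀t, hx₀M⟩ := h1
  rw [not_forall] at hx₀t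
  obtain ⟨t₀, ht₀⟩ := hx₀t
  rw [not_not] at ht₀
  -- the chain x₀ ◁ x₁ ◁ x₂ ◁ ⋯
  let X : ℕ → {x : M.Dom // x ∈ M.D w₀} := fun n => Nat.rec ⟨x₀, hx₀D⟩
    (fun _ p => ⟨(h2 p.1 p.2).choose, (h2 p.1 p.2).choose_spec.1⟩) n
  have hX0 : (X 0).1 = x₀ := rfl
  have hRelX : ∀ n, RelSem M (X n).1 (X (n+1)).1 w₀ :=
    fun n => (h2 (X n).1 (X n).2).choose_spec.2
  -- the phases: worlds where x_n is "active"
  have next : ∀ n (v : W), w₀ ≤ v → Msem M (X n).1 v →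
      ∃ u, v ≤ u ∧ Msem M (X (n+1)).1 u := by
    intro n v hv hM
    have h4' := h4 (X n).1 (X n).2 (X (n+1)).1 (X (n+1)).2 (hRelX n) v hv
    have hd : DiaSem M (ts.s+4) (Msem M (X (n+1)).1) v := (h4'.1 hM).2.1
    obtain ⟨b, hvb, -, hb⟩ := DiaSem_exists M (ts.s+3) v hd
    exact ⟨b, hvb, hb⟩
  let V : ∀ n : ℕ, {v : W // w₀ ≤ v ∧ Msem M (X n).1 v} := fun n =>
    @Nat.rec (fun n => {v : W // w₀ ≤ v ∧ Msem M (X n).1 v}) ⟨w₀, le_rfl, hX0 ▸ hx₀M⟩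
      (fun n p =>
        ⟨(next n p.1 p.2.1 p.2.2).choose,
          le_trans p.2.1 (next n p.1 p.2.1 p.2.2).choose_spec.1,
          (next n p.1 p.2.1 p.2.2).choose_spec.2⟩) n
  have hVle : ∀ n, (V n).1 ≤ (V (n+1)).1 :=
    fun n => (next n (V n).1 (V n).2.1 (V n).2.2).choose_spec.1
  -- every x_n is in the domain of every phase world
  have hXD : ∀ n (v : W), w₀ ≤ v → (X n).1 ∈ M.D v :=
    fun n v hv => M.D_mono hv (X n).2
  -- the relation persists at the phase worlds
  have hRelAt : ∀ n r (u : W), w₀ ≤ u → Msem M (X r).1 u → RelSem M (X n).1 (X (n+1)).1 u :=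
    fun n r u hu hM => h3 (X n).1 (X n).2 (X (n+1)).1 (X (n+1)).2 (hRelX n) u hu
      ⟨(X r).1, hXD r u hu, hM⟩
  -- existence of tiles on the whole grid
  have tileEx : ∀ r c, ∃ t : Fin (ts.s+1), BetaSem M (t : ℕ) (X c).1 (V r).1 := by
    intro r
    induction r with
    | zero =>
      intro c
      induction c with
      | zero => exact ⟨t₀, ht₀⟩
      | succ c ih =>
        obtain ⟨t, ht⟩ := ih
        obtain ⟨t', -, ht'⟩ := h7 (X c).1 (X c).2 (X (c+1)).1 (X (c+1)).2 w₀ le_rfl t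
          ⟨hRelAt c 0 w₀ le_rfl (hX0 ▸ hx₀M), ht⟩
        exact ⟨t', ht'⟩
    | succ r ih =>
      intro c
      obtain ⟨t, ht⟩ := ih c
      obtain ⟨t', -, ht'⟩ := h8 (X r).1 (X r).2 (X c).1 (X c).2 (V r).1 (V r).2.1 t
        ⟨(V r).2.2, ht⟩ (V (r+1)).1 (hVle r)
        ⟨(X (r+1)).1, hXD (r+1) (V (r+1)).1 (V (r+1)).2.1,
          hRelAt r (r+1) (V (r+1)).1 (V (r+1)).2.1 (V (r+1)).2.2, (V (r+1)).2.2⟩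
      exact ⟨t', ht'⟩
  let F : ℕ → ℕ → Fin (ts.s+1) := fun c r => (tileEx r c).choose
  have hF : ∀ c r, BetaSem M ((F c r : Fin (ts.s+1)) : ℕ) (X c).1 (V r).1 :=
    fun c r => (tileEx r c).choose_spec
  have uniq : ∀ c r (t : Fin (ts.s+1)), BetaSem M (t : ℕ) (X c).1 (V r).1 → t = F c r := by
    intro c r t ht
    by_contra hne
    exact h6 (X c).1 (X c).2 (V r).1 (V r).2.1 (F c r) (hF c r) t hne ht
  refine ⟨F, ?_, ?_⟩
  · -- horizontal matching
    intro n m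
    obtain ⟨t', hrl, ht'⟩ := h7 (X n).1 (X n).2 (X (n+1)).1 (X (n+1)).2 (V m).1 (V m).2.1
      (F n m) ⟨hRelAt n m (V m).1 (V m).2.1 (V m).2.2, hF n m⟩
    rw [hrl, uniq (n+1) m t' ht']
  · -- vertical matching
    intro n m
    obtain ⟨t', hud, ht'⟩ := h8 (X m).1 (X m).2 (X n).1 (X n).2 (V m).1 (V m).2.1
      (F n m) ⟨(V m).2.2, hF n m⟩ (V (m+1)).1 (hVle m)
      ⟨(X (m+1)).1, hXD (m+1) (V (m+1)).1 (V (m+1)).2.1,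
        hRelAt m (m+1) (V (m+1)).1 (V (m+1)).2.1 (V (m+1)).2.2, (V (m+1)).2.2⟩
    rw [hud, uniq n (m+1) t' ht']

end Decode

section Construct

variable {ts : TileSet} (f : ℕ → ℕ → Fin (ts.s + 1))
variable {K : Type} [Field K] [LinearOrder K] [IsStrictOrderedRing K] [FloorRing K]

/-- `L = s + 4`, the number of sub-blocks per block. -/
def Lz (ts : TileSet) : ℤ := (ts.s : ℤ) + 4

lemma Lz_pos (ts : TileSet) : 0 < Lz ts := by unfold Lz; omega

/-- The "half-cell index" of a world: `H v = ⌊2L·v⌋`. -/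
def Hc (ts : TileSet) (v : K) : ℤ := ⌊v * ((2 * Lz ts : ℤ) : K)⌋

lemma Hc_mono {u v : K} (h : u ≤ v) : Hc ts u ≤ Hc ts v := by
  apply Int.floor_le_floor
  have : (0:K) < ((2 * Lz ts : ℤ) : K) := by
    have := Lz_pos ts
    exact_mod_cast (by omega : (0:ℤ) < 2 * Lz ts)
  exact mul_le_mul_of_nonneg_right h this.le

lemma lt_of_Hc_lt {u v : K} (h : Hc ts u < Hc ts v) : u < v := by
  by_contra hc
  push_neg at hc
  exact absurd (Hc_mono (ts := ts) hc) (by omega)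

lemma Hc_nonneg {v : K} (h : 0 ≤ v) : 0 ≤ Hc ts v := by
  have h1 : Hc ts (0:K) ≤ Hc ts v := Hc_mono (ts := ts) h
  have h0 : Hc ts (0:K) = 0 := by
    unfold Hc
    rw [zero_mul, Int.floor_zero]
  omega

/-- A canonical point in half-cell `j` (its midpoint). -/
noncomputable def cellpt (ts : TileSet) (j : ℤ) : K :=
  ((2 * j + 1 : ℤ) : K) / ((4 * Lz ts : ℤ) : K)

lemma Hc_cellpt (j : ℤ) : Hc ts (cellpt ts j : K) = j := by
  have hL : (0:K) < ((4 * Lz ts : ℤ) : K) := by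
    have := Lz_pos ts
    exact_mod_cast (by omega : (0:ℤ) < 4 * Lz ts)
  unfold Hc cellpt
  rw [Int.floor_eq_iff]
  constructor
  · rw [div_mul_eq_mul_div, le_div_iff₀ hL]
    push_cast
    have := Lz_pos ts
    nlinarith [ (by exact_mod_cast this : (0:K) < (Lz ts : K)) ]
  · rw [div_mul_eq_mul_div, div_lt_iff₀ hL]
    push_cast
    have := Lz_pos ts
    nlinarith [ (by exact_mod_cast this : (0:K) < (Lz ts : K)) ]

lemma cellpt_nonneg {j : ℤ} (h : 0 ≤ j) : (0:K) ≤ cellpt ts j := by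
  unfold cellpt
  apply div_nonneg
  · exact_mod_cast (by omega : (0:ℤ) ≤ 2*j+1)
  · have := Lz_pos ts
    exact_mod_cast (by omega : (0:ℤ) ≤ 4 * Lz ts)

lemma cellpt_mono {i j : ℤ} (h : i ≤ j) : (cellpt ts i : K) ≤ cellpt ts j := by
  have hL : (0:K) < ((4 * Lz ts : ℤ) : K) := by
    have := Lz_pos ts
    exact_mod_cast (by omega : (0:ℤ) < 4 * Lz ts)
  unfold cellpt
  rw [div_le_div_iff₀ hL hL]
  have h1 : ((2*i+1 : ℤ) : K) ≤ ((2*j+1 : ℤ) : K) := by exact_mod_cast (by omega : (2*i+1:ℤ) ≤ 2*j+1)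
  nlinarith [hL]

/-- Enumeration of `ℕ` hitting every value cofinally often. -/
def colseq (b : ℕ) : ℕ := b - (Nat.sqrt b)^2

lemma colseq_cofinal (n N : ℕ) : ∃ b, N ≤ b ∧ colseq b = n := by
  refine ⟨(max n N)^2 + n, ?_, ?_⟩
  · have h1 : N ≤ max n N := le_max_right n N
    nlinarith [le_max_right n N, Nat.le_max_right n N]
  · unfold colseq
    set k := max n N with hk
    have hn : n ≤ k := le_max_left n N
    have h1 : k ≤ Nat.sqrt (k^2 + n) := Nat.le_sqrt.2 (by nlinarith)
    have h2 : Nat.sqrt (k^2 + n) < k + 1 := Nat.sqrt_lt.2 (by nlinarith)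
    have hs : Nat.sqrt (k^2 + n) = k := by omega
    rw [hs]
    omega

/-- The `P`-set at a non-marked world in sub-block `j` of block `b`. -/
def NS2 (ts : TileSet) (f : ℕ → ℕ → Fin (ts.s + 1)) (b j : ℤ) : Set (Option ℕ) :=
  if j = 0 then {some b.toNat}
  else if j = 1 then (if b % 2 = 0 then {some (colseq (b/2).toNat + 1)} else {none})
  else if j = 2 then (if b % 2 = 0 then {some (colseq (b/2).toNat)} else {none})
  else {d | ∃ m : ℕ, d = some m ∧ ((f m b.toNat : Fin (ts.s+1)) : ℕ) = ts.s + 3 - j.toNat}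

lemma NS2_ne_univ (b j : ℤ) : ∃ d, d ∉ NS2 ts f b j := by
  unfold NS2
  split
  · exact ⟨none, by simp⟩
  · split
    · split
      · exact ⟨none, by simp⟩
      · exact ⟨some 0, by simp⟩
    · split
      · split
        · exact ⟨none, by simp⟩
        · exact ⟨some 0, by simp⟩
      · exact ⟨none, by simp⟩

/-- The model encoding a tiling, over the frame `(K, ≤)`. -/
@[reducible] def TModel (ts : TileSet) (f : ℕ → ℕ → Fin (ts.s + 1)) (K : Type) [Field K] [LinearOrder K] [IsStrictOrderedRing K]
    [FloorRing K] : KModel K (fun a b : K => a ≤ b) (Letter ts.s) where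
  Dom := Option ℕ
  D := fun _ => Set.univ
  D_ne := fun _ => ⟨none, trivial⟩
  D_mono := fun _ _ _ => subset_rfl
  I := fun v n P args =>
    match P with
    | Letter.Pm => (v < 0 ∨ Even (Hc ts v)) ∨
        args 0 ∈ NS2 ts f (((Hc ts v - 1)/2)/(Lz ts)) (((Hc ts v - 1)/2) % (Lz ts))
    | Letter.q => 0 ≤ v ∧ ¬ Even (Hc ts v) ∧ Hc ts v % (2 * Lz ts) = 1
    | _ => False
  I_dom := fun _ _ _ _ _ _ => trivial

lemma psem_iff (v : K) (d : Option ℕ) :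
    psem (TModel ts f K) v d ↔ (v < 0 ∨ Even (Hc ts v)) ∨
      d ∈ NS2 ts f (((Hc ts v - 1)/2)/(Lz ts)) (((Hc ts v - 1)/2) % (Lz ts)) := Iff.rfl

lemma qsem_iff (v : K) :
    qsem (TModel ts f K) v ↔ 0 ≤ v ∧ ¬ Even (Hc ts v) ∧ Hc ts v % (2 * Lz ts) = 1 := Iff.rfl

lemma marksem_iff (v : K) :
    marksem (TModel ts f K) v ↔ (v < 0 ∨ Even (Hc ts v)) := by
  constructor
  · intro h
    by_contra hc
    obtain ⟨d, hd⟩ := NS2_ne_univ (ts := ts) (f := f)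
      (((Hc ts v - 1)/2)/(Lz ts)) (((Hc ts v - 1)/2) % (Lz ts))
    have := h d trivial
    rw [psem_iff] at this
    tauto
  · intro h d _
    rw [psem_iff]
    exact Or.inl h

lemma notmark_iff (v : K) :
    ¬ marksem (TModel ts f K) v ↔ (0 ≤ v ∧ ¬ Even (Hc ts v)) := by
  rw [marksem_iff]
  constructor
  · intro h
    push_neg at h
    exact ⟨h.1, h.2⟩
  · intro ⟨h1, h2⟩ hc
    rcases hc with h | h
    · exact absurd h1 (not_le.2 h)
    · exact h2 h

/-- Division helper: decomposition of an integer with respect to `L`. -/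
lemma Ldiv (a r : ℤ) (h0 : 0 ≤ r) (h1 : r < Lz ts) :
    (Lz ts * a + r) / (Lz ts) = a ∧ (Lz ts * a + r) % (Lz ts) = r := by
  have hL : Lz ts ≠ 0 := by have := Lz_pos ts; omega
  constructor
  · rw [add_comm, Int.add_mul_ediv_left _ _ hL, Int.ediv_eq_zero_of_lt h0 h1, zero_add]
  · rw [add_comm, Int.add_mul_emod_self_left, Int.emod_eq_of_lt h0 h1]

lemma Msem_iff (d : Option ℕ) (v : K) :
    Msem (TModel ts f K) d v ↔
      0 ≤ v ∧ ∃ m : ℕ, d = some m ∧ Hc ts v = 2 * (Lz ts * m) + 1 := by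
  have hL := Lz_pos ts
  unfold Msem
  rw [qsem_iff, psem_iff]
  constructor
  · rintro ⟨⟨hv0, hodd, hmod⟩, hP⟩
    refine ⟨hv0, ?_⟩
    rcases hP with (h | h) | hP
    · exact absurd hv0 (not_le.2 h)
    · exact absurd h hodd
    · set k := Hc ts v / (2 * Lz ts) with hk
      have hv' : 0 ≤ Hc ts v := Hc_nonneg hv0
      have hdecomp : Hc ts v = 2 * (Lz ts * k) + 1 := by
        have h1 := Int.mul_ediv_add_emod (Hc ts v) (2 * Lz ts)
        rw [← hk, hmod] at h1
        have h2 : 2 * Lz ts * k = 2 * (Lz ts * k) := by ring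
        omega
      have hk0 : 0 ≤ k := by rw [hk]; exact Int.ediv_nonneg hv' (by omega)
      have hi : (Hc ts v - 1)/2 = Lz ts * k := by
        rw [show Hc ts v - 1 = 2 * (Lz ts * k) by omega]
        exact Int.mul_ediv_cancel_left _ (by norm_num)
      have hdm := Ldiv (ts := ts) k 0 le_rfl hL
      rw [add_zero] at hdm
      rw [hi, hdm.1, hdm.2] at hP
      unfold NS2 at hP
      rw [if_pos rfl] at hP
      refine ⟨k.toNat, hP, ?_⟩
      rw [Int.toNat_of_nonneg hk0]
      exact hdecomp
  · rintro ⟨hv0, m, rfl, hH⟩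
    have hodd : ¬ Even (Hc ts v) := by
      rw [Int.even_iff]
      omega
    have hmod : Hc ts v % (2 * Lz ts) = 1 := by
      rw [hH, add_comm, show 2 * (Lz ts * (m:ℤ)) = (2 * Lz ts) * m by ring,
        Int.add_mul_emod_self_left]
      exact Int.emod_eq_of_lt (by norm_num) (by omega)
    refine ⟨⟨hv0, hodd, hmod⟩, Or.inr ?_⟩
    have hi : (Hc ts v - 1)/2 = Lz ts * m := by
      rw [show Hc ts v - 1 = 2 * (Lz ts * (m:ℤ)) by omega]
      exact Int.mul_ediv_cancel_left _ (by norm_num)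
    have hdm := Ldiv (ts := ts) (m:ℤ) 0 le_rfl hL
    rw [add_zero] at hdm
    rw [hi, hdm.1, hdm.2]
    unfold NS2
    rw [if_pos rfl]
    simp

lemma even_Hc_of_mark {a : K} (h0 : 0 ≤ a) (h : marksem (TModel ts f K) a) :
    Even (Hc ts a) := by
  rw [marksem_iff] at h
  rcases h with h | h
  · exact absurd h0 (not_le.2 h)
  · exact h

lemma step_lower {v a b : K} (hv : 0 ≤ v) (hva : v ≤ a)
    (hma : marksem (TModel ts f K) a) (hab : a ≤ b)
    (hmb : ¬ marksem (TModel ts f K) b) : Hc ts v + 1 ≤ Hc ts b := by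
  have hEa : Even (Hc ts a) := even_Hc_of_mark f (le_trans hv hva) hma
  have hEb := (notmark_iff f b).1 hmb
  have h1 : Hc ts v ≤ Hc ts a := Hc_mono (ts := ts) hva
  have h2 : Hc ts a ≤ Hc ts b := Hc_mono (ts := ts) hab
  rw [Int.even_iff] at hEa
  rcases Int.even_or_odd (Hc ts v) with hEv | hEv <;>
    [rw [Int.even_iff] at hEv; rw [Int.odd_iff] at hEv] <;>
  · have hOb : ¬ Even (Hc ts b) := hEb.2
    rw [Int.even_iff] at hOb
    omega

lemma reach {v : K} (hv : 0 ≤ v) {j : ℤ} (hj : ¬ Even j) (hge : Hc ts v + 1 ≤ j) :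
    ∃ a : K, v ≤ a ∧ marksem (TModel ts f K) a ∧ a ≤ (cellpt ts j : K) := by
  by_cases hEv : Even (Hc ts v)
  · refine ⟨v, le_rfl, (marksem_iff f v).2 (Or.inr hEv), ?_⟩
    refine le_of_lt (lt_of_Hc_lt (ts := ts) ?_)
    rw [Hc_cellpt]
    omega
  · have hge2 : Hc ts v + 2 ≤ j := by
      rw [Int.even_iff] at hEv hj
      omega
    refine ⟨cellpt ts (j-1), ?_, ?_, cellpt_mono (by omega)⟩
    · refine le_of_lt (lt_of_Hc_lt (ts := ts) ?_)
      rw [Hc_cellpt]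
      omega
    · refine (marksem_iff f _).2 (Or.inr ?_)
      rw [Hc_cellpt, Int.even_iff] at *
      omega

lemma DiaSem_concrete (Φ : ℤ → Prop) (ψ : K → Prop)
    (hψ : ∀ b : K, 0 ≤ b → ¬ marksem (TModel ts f K) b → (ψ b ↔ Φ (Hc ts b))) :
    ∀ (k : ℕ) (v : K), 0 ≤ v →
      (DiaSem (TModel ts f K) (k+1) ψ v ↔
        ∃ j : ℤ, ¬ Even j ∧ Hc ts v + 2*(k+1) - 1 ≤ j ∧ Φ j) := by
  intro k
  induction k with
  | zero =>
    intro v hv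
    constructor
    · rintro ⟨a, hva, hma, b, hab, hmb, hψb⟩
      have hb0 := ((notmark_iff f b).1 hmb).1
      exact ⟨Hc ts b, ((notmark_iff f b).1 hmb).2, by
          have := step_lower f hv hva hma hab hmb; omega,
        (hψ b hb0 hmb).1 hψb⟩
    · rintro ⟨j, hjodd, hjge, hΦ⟩
      have hv' : 0 ≤ Hc ts v := Hc_nonneg hv
      have hj0 : 0 ≤ j := by omega
      have hb0 : (0:K) ≤ cellpt ts j := cellpt_nonneg hj0
      have hmb : ¬ marksem (TModel ts f K) (cellpt ts j : K) := by
        rw [notmark_iff, Hc_cellpt]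
        exact ⟨hb0, hjodd⟩
      obtain ⟨a, hva, hma, hab⟩ := reach f hv hjodd (by omega)
      exact ⟨a, hva, hma, cellpt ts j, hab, hmb, (hψ _ hb0 hmb).2 (by rwa [Hc_cellpt])⟩
  | succ k ih =>
    intro v hv
    constructor
    · rintro ⟨a, hva, hma, b, hab, hmb, hd⟩
      have hb0 := ((notmark_iff f b).1 hmb).1
      obtain ⟨j, hjodd, hjge, hΦ⟩ := (ih b hb0).1 hd
      refine ⟨j, hjodd, ?_, hΦ⟩
      have h1 := step_lower f hv hva hma hab hmb
      have hOb : ¬ Even (Hc ts b) := ((notmark_iff f b).1 hmb).2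
      rw [Int.even_iff] at hOb hjodd
      omega
    · rintro ⟨j, hjodd, hjge, hΦ⟩
      have hv' : 0 ≤ Hc ts v := Hc_nonneg hv
      set j' := j - 2*(k+1) with hj'
      have hj'odd : ¬ Even j' := by
        rw [Int.even_iff] at *
        omega
      have hj'0 : 0 ≤ j' := by omega
      have hb0 : (0:K) ≤ cellpt ts j' := cellpt_nonneg hj'0
      have hmb : ¬ marksem (TModel ts f K) (cellpt ts j' : K) := by
        rw [notmark_iff, Hc_cellpt]
        exact ⟨hb0, hj'odd⟩
      obtain ⟨a, hva, hma, hab⟩ := reach f hv hj'odd (by omega)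
      refine ⟨a, hva, hma, cellpt ts j', hab, hmb, ?_⟩
      refine (ih _ hb0).2 ⟨j, hjodd, ?_, hΦ⟩
      rw [Hc_cellpt]
      omega

lemma DiaSemM_some (m : ℕ) (k : ℕ) (v : K) (hv : 0 ≤ v) :
    DiaSem (TModel ts f K) (k+1) (Msem (TModel ts f K) (some m)) v ↔
      Hc ts v + 2*(k+1) - 1 ≤ 2*(Lz ts * m) + 1 := by
  rw [DiaSem_concrete f (fun j => j = 2*(Lz ts * m) + 1) _ ?_ k v hv]
  · constructor
    · rintro ⟨j, _, hge, rfl⟩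
      exact hge
    · intro h
      refine ⟨2*(Lz ts * m) + 1, ?_, h, rfl⟩
      rw [Int.even_iff]
      omega
  · intro b hb0 hmb
    rw [Msem_iff]
    constructor
    · rintro ⟨-, m', hm', hH⟩
      obtain rfl : m = m' := by injection hm'
      exact hH
    · intro h
      exact ⟨hb0, m, rfl, h⟩

lemma DiaSemM_none (k : ℕ) (v : K) (hv : 0 ≤ v) :
    ¬ DiaSem (TModel ts f K) (k+1) (Msem (TModel ts f K) none) v := by
  intro h
  rw [DiaSem_concrete f (fun _ => False) _ ?_ k v hv] at h
  · obtain ⟨j, -, -, hj⟩ := h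
    exact hj
  · intro b hb0 hmb
    rw [Msem_iff]
    constructor
    · rintro ⟨-, m', hm', -⟩
      exact nomatch hm'
    · intro h
      exact h.elim

lemma Lm_inj {m m' : ℕ} (h : 2*(Lz ts * m) = 2*(Lz ts * m')) : m = m' := by
  have hL : Lz ts ≠ 0 := by have := Lz_pos ts; omega
  have h2 : (Lz ts * m : ℤ) = Lz ts * m' := by omega
  have h3 : (m : ℤ) = m' := mul_left_cancel₀ hL h2
  exact_mod_cast h3

lemma inner_iff (m n : ℕ) (hn : n ≤ ts.s + 2) (d : Option ℕ) (v : K) (hv : 0 ≤ v) :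
    DiaSem (TModel ts f K) 1 (fun b =>
        DiaSem (TModel ts f K) (n+1) (Msem (TModel ts f K) (some m)) b ∧
        ¬ DiaSem (TModel ts f K) (n+2) (Msem (TModel ts f K) (some m)) b ∧
        psem (TModel ts f K) b d) v ↔
      (Hc ts v + 2*(n:ℤ) + 2 ≤ 2*(Lz ts * m)) ∧
        d ∈ NS2 ts f ((m:ℤ) - 1) ((ts.s:ℤ) + 3 - n) := by
  have hL := Lz_pos ts
  rw [DiaSem_concrete f (fun j =>
      (j + 2*((n:ℤ)+1) - 1 ≤ 2*(Lz ts * m) + 1) ∧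
      ¬ (j + 2*((n:ℤ)+2) - 1 ≤ 2*(Lz ts * m) + 1) ∧
      d ∈ NS2 ts f (((j-1)/2)/(Lz ts)) (((j-1)/2) % (Lz ts))) _ ?_ 0 v hv]
  · constructor
    · rintro ⟨j, hodd, hge, h1, h2, hd⟩
      rw [Int.even_iff] at hodd
      have hj : j = 2*(Lz ts * m) - 2*(n:ℤ) - 1 := by omega
      have hdiv : (j-1)/2 = Lz ts * m - n - 1 := by
        rw [show j - 1 = 2 * (Lz ts * m - n - 1) by omega]
        exact Int.mul_ediv_cancel_left _ (by norm_num)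
      have hsplit : Lz ts * (m:ℤ) - n - 1 = Lz ts * ((m:ℤ) - 1) + ((ts.s:ℤ) + 3 - n) := by
        unfold Lz
        ring
      have hdm := Ldiv (ts := ts) ((m:ℤ) - 1) ((ts.s:ℤ) + 3 - n)
        (by omega) (by unfold Lz; omega)
      rw [hdiv, hsplit, hdm.1, hdm.2] at hd
      exact ⟨by omega, hd⟩
    · rintro ⟨hge, hd⟩
      refine ⟨2*(Lz ts * m) - 2*(n:ℤ) - 1, ?_, by omega, by omega, by omega, ?_⟩
      · rw [Int.even_iff]
        omega
      · have hdiv : (2*(Lz ts * m) - 2*(n:ℤ) - 1 - 1)/2 = Lz ts * m - n - 1 := by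
          rw [show 2*(Lz ts * m) - 2*(n:ℤ) - 1 - 1 = 2 * (Lz ts * m - n - 1) by ring]
          exact Int.mul_ediv_cancel_left _ (by norm_num)
        have hsplit : Lz ts * (m:ℤ) - n - 1 = Lz ts * ((m:ℤ) - 1) + ((ts.s:ℤ) + 3 - n) := by
          unfold Lz
          ring
        have hdm := Ldiv (ts := ts) ((m:ℤ) - 1) ((ts.s:ℤ) + 3 - n)
          (by omega) (by unfold Lz; omega)
        rw [hdiv, hsplit, hdm.1, hdm.2]
        exact hd
  · intro b hb0 hmb
    have hnm := (notmark_iff f b).1 hmb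
    rw [show n + 2 = (n+1)+1 from rfl, DiaSemM_some f m n b hb0,
      DiaSemM_some f m (n+1) b hb0, psem_iff]
    constructor
    · rintro ⟨h1, h2, h3⟩
      refine ⟨by push_cast at h1 ⊢; omega, by push_cast at h2 ⊢; omega, ?_⟩
      rcases h3 with (h | h) | h
      · exact absurd hnm.1 (not_le.2 h)
      · exact absurd h hnm.2
      · exact h
    · rintro ⟨h1, h2, h3⟩
      exact ⟨by push_cast at h1 ⊢; omega, by push_cast at h2 ⊢; omega, Or.inr h3⟩

lemma Beta_concrete (n : ℕ) (hn : n ≤ ts.s + 2) (d : Option ℕ) (v : K) (hv : 0 ≤ v) :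
    BetaSem (TModel ts f K) n d v ↔
      ∃ m : ℕ, (2*(Lz ts * m) = Hc ts v + 2*(ts.s:ℤ) + 6 ∨
          2*(Lz ts * m) = Hc ts v + 2*(ts.s:ℤ) + 7) ∧
        d ∈ NS2 ts f ((m:ℤ) - 1) ((ts.s:ℤ) + 3 - n) := by
  unfold BetaSem
  constructor
  · rintro ⟨e, -, h1, h2, h3⟩
    rcases e with _ | m
    · exact absurd h1 (DiaSemM_none f (ts.s+3) v hv)
    · rw [DiaSemM_some f m (ts.s+3) v hv] at h1
      rw [DiaSemM_some f m (ts.s+4) v hv] at h2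
      rw [inner_iff f m n hn d v hv] at h3
      refine ⟨m, ?_, h3.2⟩
      push_cast at h1 h2 ⊢
      omega
  · rintro ⟨m, hm, hd⟩
    refine ⟨some m, trivial, ?_, ?_, ?_⟩
    · rw [DiaSemM_some f m (ts.s+3) v hv]
      push_cast at hm ⊢
      omega
    · rw [DiaSemM_some f m (ts.s+4) v hv]
      push_cast at hm ⊢
      omega
    · rw [inner_iff f m n hn d v hv]
      exact ⟨by push_cast at hm ⊢; omega, hd⟩

lemma NS2_two (b : ℤ) (x : Option ℕ) :
    x ∈ NS2 ts f b 2 ↔ (b % 2 = 0 ∧ x = some (colseq (b/2).toNat)) ∨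
      (b % 2 = 1 ∧ x = none) := by
  unfold NS2
  norm_num
  split_ifs with h
  · simp [h, Set.mem_singleton_iff]
  · have hb : b % 2 = 1 := by omega
    simp [h, hb, Set.mem_singleton_iff]

lemma NS2_one (b : ℤ) (y : Option ℕ) :
    y ∈ NS2 ts f b 1 ↔ (b % 2 = 0 ∧ y = some (colseq (b/2).toNat + 1)) ∨
      (b % 2 = 1 ∧ y = none) := by
  unfold NS2
  norm_num
  split_ifs with h
  · simp [h, Set.mem_singleton_iff]
  · have hb : b % 2 = 1 := by omega
    simp [h, hb, Set.mem_singleton_iff]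

lemma Rel_concrete (x y : Option ℕ) (v : K) (hv : 0 ≤ v) :
    RelSem (TModel ts f K) x y v ↔
      ∃ m : ℕ, Hc ts v + 2*(ts.s:ℤ) + 8 ≤ 2*(Lz ts * m) ∧
        x ∈ NS2 ts f ((m:ℤ)-1) 2 ∧ y ∈ NS2 ts f ((m:ℤ)-1) 1 := by
  unfold RelSem
  rw [DiaSem_concrete f (fun j => ∃ m : ℕ, 2*(Lz ts * m) = j + 2*(ts.s:ℤ) + 7 ∧
      x ∈ NS2 ts f ((m:ℤ)-1) 2 ∧ y ∈ NS2 ts f ((m:ℤ)-1) 1) _ ?_ 0 v hv]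
  · constructor
    · rintro ⟨j, hodd, hge, m, hm, hx, hy⟩
      exact ⟨m, by omega, hx, hy⟩
    · rintro ⟨m, hge, hx, hy⟩
      refine ⟨2*(Lz ts * m) - 2*(ts.s:ℤ) - 7, ?_, by omega, m, by omega, hx, hy⟩
      rw [Int.even_iff]
      omega
  · intro b hb0 hmb
    have hodd : ¬ Even (Hc ts b) := ((notmark_iff f b).1 hmb).2
    rw [Int.even_iff] at hodd
    rw [Beta_concrete f (ts.s+1) (by omega) x b hb0,
      Beta_concrete f (ts.s+2) (by omega) y b hb0]
    have e1 : ((ts.s:ℤ) + 3 - (ts.s+1:ℕ)) = 2 := by push_cast; ring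
    have e2 : ((ts.s:ℤ) + 3 - (ts.s+2:ℕ)) = 1 := by push_cast; ring
    rw [e1, e2]
    constructor
    · rintro ⟨⟨m, hm, hx⟩, ⟨m', hm', hy⟩⟩
      have hm2 : 2*(Lz ts * m) = Hc ts b + 2*(ts.s:ℤ) + 7 := by omega
      have hm'2 : 2*(Lz ts * m') = Hc ts b + 2*(ts.s:ℤ) + 7 := by omega
      obtain rfl : m = m' := Lm_inj (ts := ts) (by omega)
      exact ⟨m, hm2, hx, hy⟩
    · rintro ⟨m, hm, hx, hy⟩
      exact ⟨⟨m, Or.inr hm, hx⟩, ⟨m, Or.inr hm, hy⟩⟩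

/-- The pairs related by the encoding of `◁`. -/
def goodPair (x y : Option ℕ) : Prop :=
  (∃ n : ℕ, x = some n ∧ y = some (n+1)) ∨ (x = none ∧ y = none)

lemma rel_good {x y : Option ℕ} {v : K} (hv : 0 ≤ v)
    (h : RelSem (TModel ts f K) x y v) : goodPair x y := by
  rw [Rel_concrete f x y v hv] at h
  obtain ⟨m, hge, hx, hy⟩ := h
  have hv' : 0 ≤ Hc ts v := Hc_nonneg hv
  rcases m with _ | m
  · exfalso
    have : (Lz ts * ((0:ℕ):ℤ)) = 0 := by push_cast; ring
    omega
  · rw [NS2_two] at hx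
    rw [NS2_one] at hy
    have hb : ((m+1:ℕ):ℤ) - 1 = (m:ℤ) := by push_cast; ring
    rcases hx with ⟨he, hx⟩ | ⟨he, hx⟩ <;> rcases hy with ⟨he', hy⟩ | ⟨he', hy⟩
    · exact Or.inl ⟨_, hx, hy⟩
    · omega
    · omega
    · exact Or.inr ⟨hx, hy⟩

lemma rel_all {x y : Option ℕ} (hxy : goodPair x y) (v : K) (hv : 0 ≤ v) :
    RelSem (TModel ts f K) x y v := by
  have hL := Lz_pos ts
  rw [Rel_concrete f x y v hv]
  rcases hxy with ⟨n, rfl, rfl⟩ | ⟨rfl, rfl⟩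
  · obtain ⟨b', hb', hcb⟩ := colseq_cofinal n (Hc ts v + 2*(ts.s:ℤ) + 8).toNat
    refine ⟨2*b'+1, ?_, ?_, ?_⟩
    · have h1 : (Hc ts v + 2*(ts.s:ℤ) + 8) ≤ (b' : ℤ) := by
        calc Hc ts v + 2*(ts.s:ℤ) + 8 ≤ ((Hc ts v + 2*(ts.s:ℤ) + 8).toNat : ℤ) :=
              Int.self_le_toNat _
        _ ≤ (b' : ℤ) := by exact_mod_cast hb'
      have h2 : ((2*b'+1:ℕ):ℤ) ≤ Lz ts * ((2*b'+1:ℕ):ℤ) :=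
        le_mul_of_one_le_left (by positivity) (by omega)
      push_cast at h2 ⊢
      omega
    · rw [NS2_two]
      refine Or.inl ⟨by push_cast; omega, ?_⟩
      have hdiv : (((2*b'+1:ℕ):ℤ) - 1)/2 = (b' : ℤ) := by push_cast; omega
      rw [hdiv, Int.toNat_natCast, hcb]
    · rw [NS2_one]
      refine Or.inl ⟨by push_cast; omega, ?_⟩
      have hdiv : (((2*b'+1:ℕ):ℤ) - 1)/2 = (b' : ℤ) := by push_cast; omega
      rw [hdiv, Int.toNat_natCast, hcb]
  · obtain ⟨b', hb', -⟩ := colseq_cofinal 0 (Hc ts v + 2*(ts.s:ℤ) + 8).toNat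
    refine ⟨2*b'+2, ?_, ?_, ?_⟩
    · have h1 : (Hc ts v + 2*(ts.s:ℤ) + 8) ≤ (b' : ℤ) := by
        calc Hc ts v + 2*(ts.s:ℤ) + 8 ≤ ((Hc ts v + 2*(ts.s:ℤ) + 8).toNat : ℤ) :=
              Int.self_le_toNat _
        _ ≤ (b' : ℤ) := by exact_mod_cast hb'
      have h2 : ((2*b'+2:ℕ):ℤ) ≤ Lz ts * ((2*b'+2:ℕ):ℤ) :=
        le_mul_of_one_le_left (by positivity) (by omega)
      push_cast at h2 ⊢
      omega
    · rw [NS2_two]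
      exact Or.inr ⟨by push_cast; omega, rfl⟩
    · rw [NS2_one]
      exact Or.inr ⟨by push_cast; omega, rfl⟩

lemma NS2_tile (b : ℤ) (t : Fin (ts.s+1)) (d : Option ℕ) :
    d ∈ NS2 ts f b ((ts.s:ℤ) + 3 - ((t:ℕ):ℤ)) ↔
      ∃ a : ℕ, d = some a ∧ f a b.toNat = t := by
  have ht : (t:ℕ) < ts.s + 1 := t.isLt
  unfold NS2
  rw [if_neg (by omega), if_neg (by omega), if_neg (by omega)]
  have hj : ((ts.s:ℤ) + 3 - ((t:ℕ):ℤ)).toNat = ts.s + 3 - (t:ℕ) := by omega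
  rw [Set.mem_setOf_eq, hj]
  constructor
  · rintro ⟨a, rfl, ha⟩
    refine ⟨a, rfl, ?_⟩
    have : ((f a b.toNat : Fin (ts.s+1)) : ℕ) = (t : ℕ) := by omega
    exact Fin.ext this
  · rintro ⟨a, rfl, ha⟩
    refine ⟨a, rfl, ?_⟩
    rw [ha]
    omega

section Sems

lemma con_Sem0 (v : K) (hv : 0 ≤ v) : Sem0 (TModel ts f K) v := by
  refine ⟨none, trivial, ?_⟩
  intro u hu t hB
  have hu0 : (0:K) ≤ u := le_trans hv hu
  rw [Beta_concrete f (t:ℕ) (by have := t.isLt; omega) none u hu0] at hB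
  obtain ⟨m, -, hd⟩ := hB
  rw [NS2_tile] at hd
  obtain ⟨a, ha, -⟩ := hd
  exact nomatch ha

lemma con_Sem1 (v : K) (hv : 0 ≤ v) (hH : Hc ts v = 1) : Sem1 (TModel ts f K) v := by
  refine ⟨some 0, trivial, ?_, ?_⟩
  · rw [not_forall]
    refine ⟨f 0 0, ?_⟩
    rw [not_not, Beta_concrete f _ (by have := (f 0 0).isLt; omega) _ v hv]
    refine ⟨1, Or.inr ?_, ?_⟩
    · have h1 : Lz ts * ((1:ℕ):ℤ) = (ts.s:ℤ) + 4 := by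
        push_cast
        unfold Lz
        ring
      omega
    · rw [NS2_tile]
      exact ⟨0, rfl, by norm_num⟩
  · rw [Msem_iff]
    refine ⟨hv, 0, rfl, ?_⟩
    have h1 : Lz ts * ((0:ℕ):ℤ) = 0 := by push_cast; ring
    omega

lemma con_Sem2 (v : K) (hv : 0 ≤ v) : Sem2 (TModel ts f K) v := by
  rintro (_ | n) -
  · exact ⟨none, trivial, rel_all f (Or.inr ⟨rfl, rfl⟩) v hv⟩
  · exact ⟨some (n+1), trivial, rel_all f (Or.inl ⟨n, rfl, rfl⟩) v hv⟩

lemma con_Sem3 (v : K) (hv : 0 ≤ v) : Sem3 (TModel ts f K) v := by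
  rintro x - y - hrel u hu -
  exact rel_all f (rel_good f hv hrel) u (le_trans hv hu)

lemma con_Sem4 (v : K) (hv : 0 ≤ v) : Sem4 (TModel ts f K) v := by
  rintro x - y - hrel u hu
  have hu0 : (0:K) ≤ u := le_trans hv hu
  have hLs : Lz ts = (ts.s:ℤ) + 4 := rfl
  rcases rel_good f hv hrel with ⟨n, rfl, rfl⟩ | ⟨rfl, rfl⟩
  · rw [Msem_iff, DiaSemM_some f (n+1) (ts.s+3) u hu0]
    have hlink : Lz ts * (((n+1):ℕ):ℤ) = Lz ts * (n:ℤ) + Lz ts := by push_cast; ring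
    push_cast at hlink
    constructor
    · rintro ⟨-, m, hm, hH⟩
      obtain rfl : n = m := by injection hm
      refine ⟨?_, ?_, ?_⟩
      · rw [notmark_iff]
        refine ⟨hu0, ?_⟩
        rw [Int.even_iff]
        omega
      · push_cast
        omega
      · rw [DiaSemM_some f (n+1) (ts.s+4) u hu0]
        push_cast
        omega
    · rintro ⟨hnm, h1, h2⟩
      rw [DiaSemM_some f (n+1) (ts.s+4) u hu0] at h2
      have hodd : ¬ Even (Hc ts u) := ((notmark_iff f u).1 hnm).2
      rw [Int.even_iff] at hodd
      refine ⟨hu0, n, rfl, ?_⟩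
      push_cast at h1 h2
      omega
  · rw [Msem_iff]
    constructor
    · rintro ⟨-, m, hm, -⟩
      exact nomatch hm
    · rintro ⟨-, h1, -⟩
      exact absurd h1 (DiaSemM_none f (ts.s+3) u hu0)

lemma con_Sem5 (v : K) (hv : 0 ≤ v) : Sem5 (TModel ts f K) v := by
  rintro x - y - u hu t ⟨hM, hB⟩ w hw hMw
  rw [Msem_iff] at hM hMw
  obtain ⟨hu0, m, rfl, hHu⟩ := hM
  obtain ⟨hw0, m', hm', hHw⟩ := hMw
  obtain rfl : m = m' := by injection hm'
  have ht : (t:ℕ) ≤ ts.s + 2 := by have := t.isLt; omega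
  rw [Beta_concrete f (t:ℕ) ht y u hu0] at hB
  rw [Beta_concrete f (t:ℕ) ht y w hw0, hHw, ← hHu]
  exact hB

lemma con_Sem6 (v : K) (hv : 0 ≤ v) : Sem6 (TModel ts f K) v := by
  rintro x - u hu t hB t' hne hB'
  have hu0 : (0:K) ≤ u := le_trans hv hu
  rw [Beta_concrete f (t:ℕ) (by have := t.isLt; omega) x u hu0] at hB
  rw [Beta_concrete f (t':ℕ) (by have := t'.isLt; omega) x u hu0] at hB'
  obtain ⟨m, hm, hd⟩ := hB
  obtain ⟨m', hm', hd'⟩ := hB'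
  obtain rfl : m = m' := Lm_inj (ts := ts) (by omega)
  rw [NS2_tile] at hd hd'
  obtain ⟨a, rfl, ha⟩ := hd
  obtain ⟨a', ha', ha''⟩ := hd'
  obtain rfl : a = a' := by injection ha'
  exact hne (ha'' ▸ ha ▸ rfl)

lemma con_Sem7 (hT1 : ts.T1 f) (v : K) (hv : 0 ≤ v) : Sem7 (TModel ts f K) v := by
  rintro x - y - u hu t ⟨hrel, hB⟩
  have hu0 : (0:K) ≤ u := le_trans hv hu
  rcases rel_good f hu0 hrel with ⟨n, rfl, rfl⟩ | ⟨rfl, rfl⟩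
  · rw [Beta_concrete f (t:ℕ) (by have := t.isLt; omega) _ u hu0] at hB
    obtain ⟨m, hm, hd⟩ := hB
    rw [NS2_tile] at hd
    obtain ⟨a, ha, hfa⟩ := hd
    obtain rfl : n = a := by injection ha
    refine ⟨f (n+1) ((m:ℤ)-1).toNat, ?_, ?_⟩
    · rw [← hfa]
      exact hT1 n ((m:ℤ)-1).toNat
    · rw [Beta_concrete f _ (by have := (f (n+1) ((m:ℤ)-1).toNat).isLt; omega) _ u hu0]
      refine ⟨m, hm, ?_⟩
      rw [NS2_tile]
      exact ⟨n+1, rfl, rfl⟩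
  · rw [Beta_concrete f (t:ℕ) (by have := t.isLt; omega) _ u hu0] at hB
    obtain ⟨m, -, hd⟩ := hB
    rw [NS2_tile] at hd
    obtain ⟨a, ha, -⟩ := hd
    exact nomatch ha

lemma con_Sem8 (hT2 : ts.T2 f) (v : K) (hv : 0 ≤ v) : Sem8 (TModel ts f K) v := by
  rintro x - y - u hu t ⟨hM, hB⟩ w hw hz
  have hu0 : (0:K) ≤ u := le_trans hv hu
  have hLs : Lz ts = (ts.s:ℤ) + 4 := rfl
  rw [Msem_iff] at hM
  obtain ⟨-, r, rfl, hHu⟩ := hM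
  rw [Beta_concrete f (t:ℕ) (by have := t.isLt; omega) y u hu0] at hB
  obtain ⟨m, hm, hd⟩ := hB
  have hlink : Lz ts * (((r+1):ℕ):ℤ) = Lz ts * (r:ℤ) + Lz ts := by push_cast; ring
  have hlink2 := hlink
  push_cast at hlink2
  obtain rfl : m = r + 1 := by
    refine Lm_inj (ts := ts) (m := m) (m' := r+1) ?_
    omega
  rw [NS2_tile] at hd
  obtain ⟨a, rfl, hfa⟩ := hd
  obtain ⟨z, -, hrelz, hMz⟩ := hz
  obtain hgz := rel_good f (le_trans hu0 hw) hrelz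
  rcases hgz with ⟨r', hr', rfl⟩ | ⟨hr', -⟩
  swap
  · exact nomatch hr'
  obtain rfl : r = r' := by injection hr'
  rw [Msem_iff] at hMz
  obtain ⟨hw0, k, hk, hHw⟩ := hMz
  obtain rfl : r + 1 = k := by injection hk
  have hb : (((r+1:ℕ)):ℤ) - 1 = (r:ℤ) := by push_cast; ring
  rw [hb] at hfa
  have htn : ((r:ℤ)).toNat = r := Int.toNat_natCast r
  rw [htn] at hfa
  refine ⟨f a (r+1), ?_, ?_⟩
  · rw [← hfa]
    exact hT2 a r
  · rw [Beta_concrete f _ (by have := (f a (r+1)).isLt; omega) _ w hw0]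
    refine ⟨r+2, Or.inr ?_, ?_⟩
    · have hlink2 : Lz ts * (((r+2):ℕ):ℤ) = Lz ts * (((r+1):ℕ):ℤ) + Lz ts := by
        push_cast
        ring
      omega
    · rw [NS2_tile]
      refine ⟨a, rfl, ?_⟩
      have hb2 : (((r+2:ℕ)):ℤ) - 1 = ((r+1:ℕ):ℤ) := by push_cast; ring
      rw [hb2, Int.toNat_natCast]

end Sems

/-- Construction of a constant-domain model of `B*` from a tiling. -/
lemma constructK {ts : TileSet} (K : Type) [Field K] [LinearOrder K] [IsStrictOrderedRing K] [FloorRing K]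
    (h : ∃ f : ℕ → ℕ → Fin (ts.s + 1), ts.T1 f ∧ ts.T2 f) : SatBc ts K := by
  obtain ⟨f, hT1, hT2⟩ := h
  refine ⟨TModel ts f K, fun _ _ => rfl, cellpt ts 1, fun _ => none, fun _ => trivial, ?_⟩
  rw [truth_Bstar]
  have hv : (0:K) ≤ cellpt ts 1 := cellpt_nonneg (by norm_num)
  have hH : Hc ts (cellpt ts 1 : K) = 1 := Hc_cellpt 1
  exact ⟨con_Sem0 f _ hv, con_Sem1 f _ hv hH, con_Sem2 f _ hv, con_Sem3 f _ hv,
    con_Sem4 f _ hv, con_Sem5 f _ hv, con_Sem6 f _ hv, con_Sem7 f hT1 _ hv,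
    con_Sem8 f hT2 _ hv⟩

end Construct

section Core

lemma SatB_of_SatBc {ts : TileSet} {W : Type} [LinearOrder W] (h : SatBc ts W) :
    SatB ts W := by
  obtain ⟨M, _, w, g, hg, hB⟩ := h
  exact ⟨M, w, g, hg, hB⟩

lemma validOn_le_iff (ts : TileSet) (W : Type) [LinearOrder W] :
    ValidOn (fun a b : W => a ≤ b) (Fml.neg (Bplus ts)) ↔ ¬ SatB ts W := by
  constructor
  · rintro h ⟨M, w, g, hg, hB⟩
    exact (truth_neg M (Bplus ts) w g).1 (h M w g hg)
      ((truth_plus_le M (Bstar ts) w g).2 hB)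
  · intro h M w g hg
    refine (truth_neg M (Bplus ts) w g).2 ?_
    intro hB
    exact h ⟨M, w, g, hg, (truth_plus_le M (Bstar ts) w g).1 hB⟩

lemma validOnC_le_iff (ts : TileSet) (W : Type) [LinearOrder W] :
    ValidOnC (fun a b : W => a ≤ b) (Fml.neg (Bplus ts)) ↔ ¬ SatBc ts W := by
  constructor
  · rintro h ⟨M, hM, w, g, hg, hB⟩
    exact (truth_neg M (Bplus ts) w g).1 (h M hM w g hg)
      ((truth_plus_le M (Bstar ts) w g).2 hB)
  · intro h M hM w g hg
    refine (truth_neg M (Bplus ts) w g).2 ?_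
    intro hB
    exact h ⟨M, hM, w, g, hg, (truth_plus_le M (Bstar ts) w g).1 hB⟩

lemma validOn_lt_iff (ts : TileSet) (W : Type) [LinearOrder W] :
    ValidOn (fun a b : W => a < b) (Fml.neg (Bplus ts)) ↔ ¬ SatB ts W := by
  constructor
  · rintro h ⟨M, w, g, hg, hB⟩
    have hB' : truth (leModel (ltModel M)) (Bstar ts) w g := by
      exact hB
    exact (truth_neg (ltModel M) (Bplus ts) w g).1 (h (ltModel M) w g hg)
      ((truth_plus_lt (ltModel M) (Bstar ts) w g).2 hB')
  · intro h M w g hg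
    refine (truth_neg M (Bplus ts) w g).2 ?_
    intro hB
    exact h ⟨leModel M, w, g, hg, (truth_plus_lt M (Bstar ts) w g).1 hB⟩

lemma validOnC_lt_iff (ts : TileSet) (W : Type) [LinearOrder W] :
    ValidOnC (fun a b : W => a < b) (Fml.neg (Bplus ts)) ↔ ¬ SatBc ts W := by
  constructor
  · rintro h ⟨M, hM, w, g, hg, hB⟩
    have hB' : truth (leModel (ltModel M)) (Bstar ts) w g := by
      exact hB
    exact (truth_neg (ltModel M) (Bplus ts) w g).1 (h (ltModel M) hM w g hg)
      ((truth_plus_lt (ltModel M) (Bstar ts) w g).2 hB')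
  · intro h M hM w g hg
    refine (truth_neg M (Bplus ts) w g).2 ?_
    intro hB
    exact h ⟨leModel M, hM, w, g, hg, (truth_plus_lt M (Bstar ts) w g).1 hB⟩

/-- Decoding: from any expanding-domain model of `B*` over a linear order,
extract a tiling. -/
lemma decodeB {ts : TileSet} {W : Type} [LinearOrder W]
    (h : SatB ts W) : ∃ f : ℕ → ℕ → Fin (ts.s + 1), ts.T1 f ∧ ts.T2 f := by
  obtain ⟨M, w, g, -, hB⟩ := h
  exact decode_semAll M w ((truth_Bstar M w g).1 hB)

/-- Construction: from a tiling, a constant-domain model of `B*` over `(ℚ,≤)`. -/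
lemma constructQ {ts : TileSet} (h : ∃ f : ℕ → ℕ → Fin (ts.s + 1), ts.T1 f ∧ ts.T2 f) :
    SatBc ts ℚ := constructK ℚ h

/-- Construction: from a tiling, a constant-domain model of `B*` over `(ℝ,≤)`. -/
lemma constructR {ts : TileSet} (h : ∃ f : ℕ → ℕ → Fin (ts.s + 1), ts.T1 f ∧ ts.T2 f) :
    SatBc ts ℝ := constructK ℝ h

lemma satB_iff_Q (ts : TileSet) :
    SatB ts ℚ ↔ ∃ f : ℕ → ℕ → Fin (ts.s + 1), ts.T1 f ∧ ts.T2 f :=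
  ⟨decodeB, fun h => SatB_of_SatBc (constructQ h)⟩

lemma satBc_iff_Q (ts : TileSet) :
    SatBc ts ℚ ↔ ∃ f : ℕ → ℕ → Fin (ts.s + 1), ts.T1 f ∧ ts.T2 f :=
  ⟨fun h => decodeB (SatB_of_SatBc h), constructQ⟩

lemma satB_iff_R (ts : TileSet) :
    SatB ts ℝ ↔ ∃ f : ℕ → ℕ → Fin (ts.s + 1), ts.T1 f ∧ ts.T2 f :=
  ⟨decodeB, fun h => SatB_of_SatBc (constructR h)⟩

lemma satBc_iff_R (ts : TileSet) :
    SatBc ts ℝ ↔ ∃ f : ℕ → ℕ → Fin (ts.s + 1), ts.T1 f ∧ ts.T2 f :=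
  ⟨fun h => decodeB (SatB_of_SatBc h), constructR⟩

end Core

/-- for each of the eight logics `L(ℚ,≤)`, `L_c(ℚ,≤)`, `L(ℚ,<)`,
`L_c(ℚ,<)`, `L(ℝ,≤)`, `L_c(ℝ,≤)`, `L(ℝ,<)`, `L_c(ℝ,<)`: `¬B⁺` belongs to the logic
iff there is no function `f : ℕ×ℕ → T` satisfying (T1) and (T2). -/
theorem statement13 (ts : TileSet) :
    (ValidOn (fun a b : ℚ => a ≤ b) (Fml.neg (Bplus ts)) ↔
      ¬ ∃ f : ℕ → ℕ → Fin (ts.s + 1), ts.T1 f ∧ ts.T2 f) ∧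
    (ValidOnC (fun a b : ℚ => a ≤ b) (Fml.neg (Bplus ts)) ↔
      ¬ ∃ f : ℕ → ℕ → Fin (ts.s + 1), ts.T1 f ∧ ts.T2 f) ∧
    (ValidOn (fun a b : ℚ => a < b) (Fml.neg (Bplus ts)) ↔
      ¬ ∃ f : ℕ → ℕ → Fin (ts.s + 1), ts.T1 f ∧ ts.T2 f) ∧
    (ValidOnC (fun a b : ℚ => a < b) (Fml.neg (Bplus ts)) ↔
      ¬ ∃ f : ℕ → ℕ → Fin (ts.s + 1), ts.T1 f ∧ ts.T2 f) ∧
    (ValidOn (fun a b : ℝ => a ≤ b) (Fml.neg (Bplus ts)) ↔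
      ¬ ∃ f : ℕ → ℕ → Fin (ts.s + 1), ts.T1 f ∧ ts.T2 f) ∧
    (ValidOnC (fun a b : ℝ => a ≤ b) (Fml.neg (Bplus ts)) ↔
      ¬ ∃ f : ℕ → ℕ → Fin (ts.s + 1), ts.T1 f ∧ ts.T2 f) ∧
    (ValidOn (fun a b : ℝ => a < b) (Fml.neg (Bplus ts)) ↔
      ¬ ∃ f : ℕ → ℕ → Fin (ts.s + 1), ts.T1 f ∧ ts.T2 f) ∧
    (ValidOnC (fun a b : ℝ => a < b) (Fml.neg (Bplus ts)) ↔
      ¬ ∃ f : ℕ → ℕ → Fin (ts.s + 1), ts.T1 f ∧ ts.T2 f) := by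
  refine ⟨?_, ?_, ?_, ?_, ?_, ?_, ?_, ?_⟩
  · rw [validOn_le_iff, satB_iff_Q]
  · rw [validOnC_le_iff, satBc_iff_Q]
  · rw [validOn_lt_iff, satB_iff_Q]
  · rw [validOnC_lt_iff, satBc_iff_Q]
  · rw [validOn_le_iff, satB_iff_R]
  · rw [validOnC_le_iff, satBc_iff_R]
  · rw [validOn_lt_iff, satB_iff_R]
  · rw [validOnC_lt_iff, satBc_iff_R]

end FOML
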